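/- arXiv:1709.09904 — 14 statements merged into one kernel-verified Lean document; each statement's English description precedes it below -/
import Mathlib

section
/- Let n ≥ 1 be a natural number, let c be a nonzero real number, and let x, y be real numbers. Then the sum over all pairs of natural numbers (j_A, j_R) with j_A + j_R ≤ n of (n!/(j_0!·j_A!·j_R!))·c^{max(j_A+j_R−1,0)}·x^{j_A}·y^{j_R}, where j_0 = n − j_A − j_R, equals 1 − 1/c + (1/c)·(1 + c·x + c·y)^n. -/
open Finset

lemma tri_swap (n : ℕ) (F : ℕ → ℕ → ℝ) :
    ∑ k ∈ range (n + 1), ∑ jA ∈ range (k + 1), F jA (k - jA)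
      = ∑ jA ∈ range (n + 1), ∑ jR ∈ range (n + 1 - jA), F jA jR := by
  rw [Finset.sum_sigma', Finset.sum_sigma']
  apply Finset.sum_nbij' (fun p => ⟨p.2, p.1 - p.2⟩) (fun p => ⟨p.1 + p.2, p.1⟩)
  · rintro ⟨k, jA⟩ hp
    simp only [Finset.mem_sigma, Finset.mem_range] at hp ⊢
    omega
  · rintro ⟨jA, jR⟩ hp
    simp only [Finset.mem_sigma, Finset.mem_range] at hp ⊢
    omega
  · rintro ⟨k, jA⟩ hp
    simp only [Finset.mem_sigma, Finset.mem_range] at hp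
    simp only [Sigma.mk.inj_iff]
    constructor
    · omega
    · exact heq_of_eq rfl
  · rintro ⟨jA, jR⟩ hp
    simp only [Finset.mem_sigma, Finset.mem_range] at hp
    simp only [Sigma.mk.inj_iff]
    constructor
    · trivial
    · simp [Nat.add_sub_cancel_left]
  · rintro ⟨k, jA⟩ hp
    rfl

lemma trinom (n : ℕ) (a b : ℝ) :
    ∑ jA ∈ range (n + 1), ∑ jR ∈ range (n + 1 - jA),
      (n.factorial : ℝ) /
          ((n - jA - jR).factorial * jA.factorial * jR.factorial) * a ^ jA * b ^ jR
      = (1 + a + b) ^ n := by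
  rw [← tri_swap]
  rw [show (1 + a + b) = (a + b) + 1 by ring, add_pow]
  refine Finset.sum_congr rfl fun k hk => ?_
  rw [add_pow, Finset.sum_mul, Finset.sum_mul]
  refine Finset.sum_congr rfl fun jA hjA => ?_
  simp only [Finset.mem_range, Nat.lt_succ_iff] at hk hjA
  have h1 : n - jA - (k - jA) = n - k := by omega
  rw [h1, one_pow, mul_one, Nat.cast_choose ℝ hk, Nat.cast_choose ℝ hjA]
  have f1 : ((n - k).factorial : ℝ) ≠ 0 := Nat.cast_ne_zero.mpr (Nat.factorial_ne_zero _)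
  have f2 : ((k - jA).factorial : ℝ) ≠ 0 := Nat.cast_ne_zero.mpr (Nat.factorial_ne_zero _)
  have f3 : (jA.factorial : ℝ) ≠ 0 := Nat.cast_ne_zero.mpr (Nat.factorial_ne_zero _)
  have f4 : (k.factorial : ℝ) ≠ 0 := Nat.cast_ne_zero.mpr (Nat.factorial_ne_zero _)
  field_simp

/-- Closed-form of the statistical weight sum under total cooperativity with
constant `c`: the sum over pairs `(jA, jR)` with `jA + jR ≤ n` of
`(n!/(j0!·jA!·jR!))·c^(max(jA+jR−1,0))·x^jA·y^jR` equals
`1 − 1/c + (1/c)·(1 + c·x + c·y)^n`. -/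
theorem total_cooperativity_sum (n : ℕ) (hn : 1 ≤ n) (c : ℝ) (hc : c ≠ 0) (x y : ℝ) :
    ∑ jA ∈ Finset.range (n + 1), ∑ jR ∈ Finset.range (n + 1 - jA),
      (n.factorial : ℝ) /
          ((n - jA - jR).factorial * jA.factorial * jR.factorial) *
        c ^ (jA + jR - 1) * x ^ jA * y ^ jR
      = 1 - 1 / c + (1 / c) * (1 + c * x + c * y) ^ n := by
  have hg : ∑ jA ∈ range (n + 1), ∑ jR ∈ range (n + 1 - jA),
      (n.factorial : ℝ) /
          ((n - jA - jR).factorial * jA.factorial * jR.factorial) *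
        c ^ (jA + jR) * x ^ jA * y ^ jR
      = (1 + c * x + c * y) ^ n := by
    rw [← trinom n (c * x) (c * y)]
    refine Finset.sum_congr rfl fun jA _ => Finset.sum_congr rfl fun jR _ => ?_
    rw [mul_pow, mul_pow, pow_add]
    ring
  have step : ∑ jA ∈ Finset.range (n + 1), ∑ jR ∈ Finset.range (n + 1 - jA),
      (n.factorial : ℝ) /
          ((n - jA - jR).factorial * jA.factorial * jR.factorial) *
        c ^ (jA + jR - 1) * x ^ jA * y ^ jR
      = ∑ jA ∈ Finset.range (n + 1), ∑ jR ∈ Finset.range (n + 1 - jA),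
        ((if jA = 0 ∧ jR = 0 then (1 : ℝ) - 1 / c else 0) +
          (1 / c) * ((n.factorial : ℝ) /
            ((n - jA - jR).factorial * jA.factorial * jR.factorial) *
          c ^ (jA + jR) * x ^ jA * y ^ jR)) := by
    refine Finset.sum_congr rfl fun jA _ => Finset.sum_congr rfl fun jR _ => ?_
    by_cases h : jA + jR = 0
    · have h1 : jA = 0 := by omega
      have h2 : jR = 0 := by omega
      subst h1; subst h2
      rw [if_pos ⟨rfl, rfl⟩]
      have : (n - 0 - 0) = n := by omega
      rw [this]
      have hf : (n.factorial : ℝ) ≠ 0 := Nat.cast_ne_zero.mpr (Nat.factorial_ne_zero _)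
      field_simp
      simp only [Nat.factorial_zero, Nat.cast_one, add_zero, Nat.zero_sub, pow_zero]
      ring
    · have hne : ¬(jA = 0 ∧ jR = 0) := by omega
      rw [if_neg hne, zero_add]
      have hp : c ^ (jA + jR) = c * c ^ (jA + jR - 1) := by
        rw [← pow_succ']
        congr 1
        omega
      rw [hp]
      field_simp
  have hif : ∑ jA ∈ Finset.range (n + 1), ∑ jR ∈ Finset.range (n + 1 - jA),
      (if jA = 0 ∧ jR = 0 then (1 : ℝ) - 1 / c else 0) = 1 - 1 / c := by
    rw [Finset.sum_eq_single 0]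
    · rw [Finset.sum_eq_single 0]
      · simp
      · intro b _ hb; simp [hb]
      · intro h; exfalso; apply h; simp only [Finset.mem_range]; omega
    · intro jA _ hjA
      exact Finset.sum_eq_zero fun jR _ => by simp [hjA]
    · intro h; exfalso; apply h; simp
  rw [step]
  simp only [Finset.sum_add_distrib, ← Finset.mul_sum]
  rw [hif, hg]
end

section
/- Let a > 1, 0 < r < 1, K_A, K_R > 0 and c ≥ 1 be real numbers, and let A, R ≥ 0. Then F(A, R) = 1 if and only if R/K_R = ((a − 1)/(1 − r))·(A/K_A). -/
/-- The regulation factor of the BEWARE operator with 3 binding sites and total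
cooperativity equals 1 exactly on the linear threshold
`R/K_R = ((a−1)/(1−r))·(A/K_A)`. -/
theorem threshold_iff (a r KA KR c A R : ℝ)
    (ha : 1 < a) (hr0 : 0 < r) (hr1 : r < 1) (hKA : 0 < KA) (hKR : 0 < KR)
    (hc : 1 ≤ c) (hA : 0 ≤ A) (hR : 0 ≤ R) :
    (1 - 1 / c + (1 / c) * (1 + a * c * A / KA + r * c * R / KR) ^ 3) /
        (1 - 1 / c + (1 / c) * (1 + c * A / KA + c * R / KR) ^ 3) = 1
      ↔ R / KR = (a - 1) / (1 - r) * (A / KA) := by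
  have hc0 : (0:ℝ) < c := lt_of_lt_of_le one_pos hc
  have hcinv : (0:ℝ) < 1 / c := by positivity
  have hcle : 1 / c ≤ 1 := by rw [div_le_one hc0]; exact hc
  have hX : (0:ℝ) < 1 + a * c * A / KA + r * c * R / KR := by positivity
  have hY : (0:ℝ) < 1 + c * A / KA + c * R / KR := by positivity
  have hD : (0:ℝ) < 1 - 1 / c + (1 / c) * (1 + c * A / KA + c * R / KR) ^ 3 := by
    have := mul_pos hcinv (pow_pos hY 3)
    nlinarith
  rw [div_eq_one_iff_eq hD.ne']
  have h1 : (1 - 1 / c + (1 / c) * (1 + a * c * A / KA + r * c * R / KR) ^ 3 =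
      1 - 1 / c + (1 / c) * (1 + c * A / KA + c * R / KR) ^ 3) ↔
      (1 + a * c * A / KA + r * c * R / KR) ^ 3 = (1 + c * A / KA + c * R / KR) ^ 3 := by
    constructor
    · intro h
      have h2 : (1 / c) * (1 + a * c * A / KA + r * c * R / KR) ^ 3 =
          (1 / c) * (1 + c * A / KA + c * R / KR) ^ 3 := by linarith
      exact mul_left_cancel₀ hcinv.ne' h2
    · intro h; rw [h]
  have h1r : (1:ℝ) - r ≠ 0 := by linarith
  rw [h1, pow_left_inj₀ hX.le hY.le (by norm_num : 3 ≠ 0)]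
  constructor
  · intro h
    field_simp at h
    have h2 : c * (a * A * KR + r * R * KA) = c * (A * KR + R * KA) := by
      linear_combination h
    have h3 := mul_left_cancel₀ hc0.ne' h2
    rw [div_eq_iff hKR.ne']
    field_simp [h1r]
    linarith [h3]
  · intro h
    have h' : R * ((1 - r) * KA) = (a - 1) * A * KR := by
      field_simp [h1r] at h
      linarith [h]
    field_simp
    linear_combination (-c) * h'
end

section
/- Let a > 1, 0 < r < 1, K_A, K_R > 0 and c ≥ 1 be real numbers, and let A, R ≥ 0. Then F(A, R) > 1 if and only if R/K_R < ((a − 1)/(1 − r))·(A/K_A), and F(A, R) < 1 if and only if R/K_R > ((a − 1)/(1 − r))·(A/K_A). -/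
/-- Activated and repressed regions of the BEWARE regulation factor with total
cooperativity: `F > 1` iff `R/K_R < ((a−1)/(1−r))·(A/K_A)` and `F < 1` iff the
reverse strict inequality holds. -/
theorem activation_repression_regions (a r KA KR c A R : ℝ)
    (ha : 1 < a) (hr0 : 0 < r) (hr1 : r < 1) (hKA : 0 < KA) (hKR : 0 < KR)
    (hc : 1 ≤ c) (hA : 0 ≤ A) (hR : 0 ≤ R) :
    (1 < (1 - 1 / c + (1 / c) * (1 + a * c * A / KA + r * c * R / KR) ^ 3) /
          (1 - 1 / c + (1 / c) * (1 + c * A / KA + c * R / KR) ^ 3)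
        ↔ R / KR < (a - 1) / (1 - r) * (A / KA)) ∧
    ((1 - 1 / c + (1 / c) * (1 + a * c * A / KA + r * c * R / KR) ^ 3) /
          (1 - 1 / c + (1 / c) * (1 + c * A / KA + c * R / KR) ^ 3) < 1
        ↔ (a - 1) / (1 - r) * (A / KA) < R / KR) := by
  have hc0 : (0 : ℝ) < c := lt_of_lt_of_le one_pos hc
  have hic : (0 : ℝ) < 1 / c := by positivity
  have hx : (0 : ℝ) ≤ A / KA := div_nonneg hA hKA.le
  have hy : (0 : ℝ) ≤ R / KR := div_nonneg hR hKR.le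
  have e1 : a * c * A / KA = a * c * (A / KA) := by rw [mul_div_assoc]
  have e2 : r * c * R / KR = r * c * (R / KR) := by rw [mul_div_assoc]
  have e3 : c * A / KA = c * (A / KA) := by rw [mul_div_assoc]
  have e4 : c * R / KR = c * (R / KR) := by rw [mul_div_assoc]
  rw [e1, e2, e3, e4]
  set x := A / KA with hxdef
  set y := R / KR with hydef
  set u := 1 + a * c * x + r * c * y with hudef
  set v := 1 + c * x + c * y with hvdef
  have hu0 : 0 ≤ u := by positivity
  have hv0 : 0 ≤ v := by positivity
  have hD : 0 < 1 - 1 / c + 1 / c * v ^ 3 := by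
    have h1 : (0 : ℝ) ≤ 1 - 1 / c := by
      have : 1 / c ≤ 1 := by
        rw [div_le_one hc0]; exact hc
      linarith
    have h2 : 0 < 1 / c * v ^ 3 := by positivity
    linarith
  have key : v < u ↔ y < (a - 1) / (1 - r) * x := by
    rw [div_mul_eq_mul_div, lt_div_iff₀ (by linarith : (0:ℝ) < 1 - r)]
    constructor
    · intro h; nlinarith
    · intro h; nlinarith
  have key2 : u < v ↔ (a - 1) / (1 - r) * x < y := by
    rw [div_mul_eq_mul_div, div_lt_iff₀ (by linarith : (0:ℝ) < 1 - r)]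
    constructor
    · intro h; nlinarith
    · intro h; nlinarith
  constructor
  · rw [one_lt_div hD, add_lt_add_iff_left, mul_lt_mul_iff_right₀ hic,
      pow_lt_pow_iff_left₀ hv0 hu0 (by norm_num)]
    exact key
  · rw [div_lt_one hD, add_lt_add_iff_left, mul_lt_mul_iff_right₀ hic,
      pow_lt_pow_iff_left₀ hu0 hv0 (by norm_num)]
    exact key2
end

section
/- Let a > 1, 0 < r < 1, K_A, K_R > 0 be real numbers and take cooperativity constant c = 1, so that F(A, R) = ((1 + a·A/K_A + r·R/K_R)/(1 + A/K_A + R/K_R))^3. Let K > 0 be a real number with K^{1/3} ≠ r. Then for A, R ≥ 0, F(A, R) = K if and only if R/K_R = (K^{1/3} − 1)/(r − K^{1/3}) + ((K^{1/3} − a)/(r − K^{1/3}))·(A/K_A). -/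
/-- Isolines of the non-cooperative regulation factor
`F(A,R) = ((1 + a·A/K_A + r·R/K_R)/(1 + A/K_A + R/K_R))³`: for `K > 0` with
`K^{1/3} ≠ r`, `F(A,R) = K` iff
`R/K_R = (K^{1/3} − 1)/(r − K^{1/3}) + ((K^{1/3} − a)/(r − K^{1/3}))·(A/K_A)`. -/
theorem isolines (a r KA KR K A R : ℝ)
    (ha : 1 < a) (hr0 : 0 < r) (hr1 : r < 1) (hKA : 0 < KA) (hKR : 0 < KR)
    (hK : 0 < K) (hKr : K ^ ((1 : ℝ) / 3) ≠ r) (hA : 0 ≤ A) (hR : 0 ≤ R) :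
    ((1 + a * A / KA + r * R / KR) / (1 + A / KA + R / KR)) ^ 3 = K
      ↔ R / KR = (K ^ ((1 : ℝ) / 3) - 1) / (r - K ^ ((1 : ℝ) / 3))
          + (K ^ ((1 : ℝ) / 3) - a) / (r - K ^ ((1 : ℝ) / 3)) * (A / KA) := by
  set k := K ^ ((1 : ℝ) / 3) with hkdef
  have hk : 0 < k := Real.rpow_pos_of_pos hK _
  have hk3 : k ^ 3 = K := by
    rw [hkdef, ← Real.rpow_natCast (K ^ ((1:ℝ)/3)) 3, ← Real.rpow_mul hK.le]
    norm_num
  rw [mul_div_assoc a, mul_div_assoc r]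
  set x := A / KA with hxdef
  set y := R / KR with hydef
  have hx : 0 ≤ x := div_nonneg hA hKA.le
  have hy : 0 ≤ y := div_nonneg hR hKR.le
  have hN : 0 < 1 + a * x + r * y := by nlinarith
  have hD : 0 < 1 + x + y := by nlinarith
  have hrk : r - k ≠ 0 := sub_ne_zero.mpr (Ne.symm hKr)
  have hstep : ((1 + a * x + r * y) / (1 + x + y)) ^ 3 = K
      ↔ (1 + a * x + r * y) / (1 + x + y) = k := by
    rw [← hk3]
    exact pow_left_inj₀ (le_of_lt (div_pos hN hD)) hk.le (by norm_num)
  have hrhs : (k - 1) / (r - k) + (k - a) / (r - k) * x = ((k - 1) + (k - a) * x) / (r - k) := by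
    ring
  rw [hstep, div_eq_iff hD.ne', hrhs, eq_div_iff hrk]
  constructor <;> intro h <;> nlinarith [h]
end

section
/- Let a > 1, 0 < r < 1 and c_A, c_R ≥ 1 be real numbers, and fix x > 0. Consider the cubic polynomial P(y) = G(x, y) in the variable y. Then P has exactly one positive root y*, and the derivative satisfies P′(y*) < 0. -/
/-- The threshold function `G` for the BEWARE operator with 3 binding sites under
partial cooperativity. -/
def G (a r cA cR x y : ℝ) : ℝ :=
  (1 + cA * a * x + cR * r * y) ^ 3 - (1 + cA * x + cR * y) ^ 3
    + (cR - 1) * ((1 + cA * a * x) ^ 3 - (1 + cA * x) ^ 3)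
    + (cA - 1) * ((1 + cR * r * y) ^ 3 - (1 + cR * y) ^ 3)

/-- The derivative of `G` with respect to `y`. -/
noncomputable def Gd (a r cA cR x y : ℝ) : ℝ :=
  3 * cR * r * (1 + cA * a * x + cR * r * y) ^ 2 - 3 * cR * (1 + cA * x + cR * y) ^ 2
    + (cA - 1) * (3 * cR * r * (1 + cR * r * y) ^ 2 - 3 * cR * (1 + cR * y) ^ 2)

lemma hasDerivAt_G (a r cA cR x y : ℝ) :
    HasDerivAt (fun y' => G a r cA cR x y') (Gd a r cA cR x y) y := by
  have hl : ∀ c d : ℝ, HasDerivAt (fun y' : ℝ => c + d * y') d y := by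
    intro c d
    simpa using (hasDerivAt_id y).const_mul d |>.const_add c
  have h1 := ((hl (1 + cA * a * x) (cR * r)).pow 3)
  have h2 := ((hl (1 + cA * x) cR).pow 3)
  have h3 := ((hl 1 (cR * r)).pow 3)
  have h4 := ((hl 1 cR).pow 3)
  have h := (((h1.sub h2).add_const
      ((cR - 1) * ((1 + cA * a * x) ^ 3 - (1 + cA * x) ^ 3))).add
      ((h3.sub h4).const_mul (cA - 1)))
  have heq : Gd a r cA cR x y =
      (↑3 * (1 + cA * a * x + cR * r * y) ^ (3 - 1) * (cR * r)
        - ↑3 * (1 + cA * x + cR * y) ^ (3 - 1) * cR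
        + (cA - 1) * (↑3 * (1 + cR * r * y) ^ (3 - 1) * (cR * r)
          - ↑3 * (1 + cR * y) ^ (3 - 1) * cR) : ℝ) := by
    norm_num [Gd]; ring
  rw [heq]
  exact h

lemma key (r w u v p q : ℝ) (hr0 : 0 < r) (hr1 : r < 1) (hw : 0 ≤ w)
    (hp0 : 0 < p) (hpq : p < q) (hrq : r * q < p) (hqv : q < v) (hu0 : 0 < u)
    (hcube : u ^ 3 + w * p ^ 3 ≤ v ^ 3 + w * q ^ 3) :
    r * (u ^ 2 + w * p ^ 2) < v ^ 2 + w * q ^ 2 := by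
  have hq0 : 0 < q := hp0.trans hpq
  have hv0 : 0 < v := hq0.trans hqv
  rcases le_or_gt u v with h | h
  · nlinarith [mul_nonneg hw (sq_nonneg p), mul_nonneg hw (mul_pos hq0 hq0).le,
      mul_pos hv0 hv0, mul_le_mul h h hu0.le hv0.le,
      mul_nonneg hw (mul_pos hq0 (add_pos hp0 hq0)).le]
  · have hstar : u ^ 2 * v < v ^ 3 + w * (q ^ 3 - p ^ 3) := by
      nlinarith [mul_pos (mul_pos hu0 hu0) (sub_pos.mpr h)]
    have hbr : r * q ^ 3 - r * p ^ 3 + r * p ^ 2 * v - q ^ 2 * v < 0 := by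
      have h1 : r * p ^ 2 < q ^ 2 := by nlinarith
      have h2 : v * (r * p ^ 2 - q ^ 2) ≤ q * (r * p ^ 2 - q ^ 2) := by nlinarith
      nlinarith [mul_pos (mul_pos hr0 hp0) hp0, mul_pos hq0 hq0]
    have hW : 0 < v * ((v ^ 2 + w * q ^ 2) - r * (u ^ 2 + w * p ^ 2)) := by
      nlinarith [mul_lt_mul_of_pos_left hstar hr0, mul_nonpos_of_nonneg_of_nonpos hw hbr.le,
        mul_pos (sub_pos.mpr hr1) (pow_pos hv0 3)]
    nlinarith [mul_pos hv0 hv0]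

lemma Gd_neg_at_root (a r cA cR x y : ℝ)
    (ha : 1 < a) (hr0 : 0 < r) (hr1 : r < 1) (hcA : 1 ≤ cA) (hcR : 1 ≤ cR)
    (hx : 0 < x) (hy : 0 < y) (hroot : G a r cA cR x y = 0) :
    Gd a r cA cR x y < 0 := by
  have hcA0 : (0:ℝ) < cA := lt_of_lt_of_le one_pos hcA
  have hcR0 : (0:ℝ) < cR := lt_of_lt_of_le one_pos hcR
  have ha0 : (0:ℝ) < a := lt_trans one_pos ha
  have hax : 0 < cA * a * x := by positivity
  have hcx : 0 < cA * x := by positivity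
  have hry : 0 < cR * r * y := by positivity
  have hqy : 0 < cR * y := by positivity
  have hAB : 1 + cA * x < 1 + cA * a * x := by
    nlinarith [mul_pos (mul_pos hcA0 hx) (sub_pos.mpr ha)]
  have h0 : (0:ℝ) < 1 + cA * x := by linarith
  have hABc : (1 + cA * x) ^ 3 ≤ (1 + cA * a * x) ^ 3 :=
    pow_le_pow_left₀ h0.le hAB.le 3
  have hK : 0 ≤ (cR - 1) * ((1 + cA * a * x) ^ 3 - (1 + cA * x) ^ 3) :=
    mul_nonneg (by linarith) (by linarith)
  have hGeq : (1 + cA * a * x + cR * r * y) ^ 3 + (cA - 1) * (1 + cR * r * y) ^ 3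
      = (1 + cA * x + cR * y) ^ 3 + (cA - 1) * (1 + cR * y) ^ 3
        - (cR - 1) * ((1 + cA * a * x) ^ 3 - (1 + cA * x) ^ 3) := by
    have h := hroot
    simp only [G] at h
    linear_combination h
  have hcube : (1 + cA * a * x + cR * r * y) ^ 3 + (cA - 1) * (1 + cR * r * y) ^ 3
      ≤ (1 + cA * x + cR * y) ^ 3 + (cA - 1) * (1 + cR * y) ^ 3 := by linarith
  have hpq' : cR * r * y < cR * y := by
    nlinarith [mul_pos (mul_pos hcR0 hy) (sub_pos.mpr hr1)]
  have hkey := key r (cA - 1) (1 + cA * a * x + cR * r * y) (1 + cA * x + cR * y)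
    (1 + cR * r * y) (1 + cR * y) hr0 hr1 (by linarith)
    (by linarith) (by linarith)
    (by nlinarith [mul_pos hqy (sub_pos.mpr hr1)])
    (by linarith) (by linarith) hcube
  have hGd : Gd a r cA cR x y
      = 3 * cR * (r * ((1 + cA * a * x + cR * r * y) ^ 2 + (cA - 1) * (1 + cR * r * y) ^ 2)
        - ((1 + cA * x + cR * y) ^ 2 + (cA - 1) * (1 + cR * y) ^ 2)) := by
    simp only [Gd]; ring
  rw [hGd]
  exact mul_neg_of_pos_of_neg (by positivity) (by linarith)

lemma G_pos_at_zero (a r cA cR x : ℝ)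
    (ha : 1 < a) (hcA : 1 ≤ cA) (hcR : 1 ≤ cR) (hx : 0 < x) :
    0 < G a r cA cR x 0 := by
  have hcA0 : (0:ℝ) < cA := lt_of_lt_of_le one_pos hcA
  have hcx : 0 < cA * x := mul_pos hcA0 hx
  have hAB : 1 + cA * x < 1 + cA * a * x := by
    nlinarith [mul_pos (mul_pos hcA0 hx) (sub_pos.mpr ha)]
  have h0 : (0:ℝ) < 1 + cA * x := by linarith
  have hABc : (1 + cA * x) ^ 3 < (1 + cA * a * x) ^ 3 := by
    apply pow_lt_pow_left₀ hAB h0.le; norm_num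
  have hval : G a r cA cR x 0 = cR * ((1 + cA * a * x) ^ 3 - (1 + cA * x) ^ 3) := by
    simp only [G]; ring
  rw [hval]
  have hcR0 : (0:ℝ) < cR := lt_of_lt_of_le one_pos hcR
  exact mul_pos hcR0 (by linarith)

lemma G_neg_at_large (a r cA cR x : ℝ)
    (ha : 1 < a) (hr0 : 0 < r) (hr1 : r < 1) (hcA : 1 ≤ cA) (hcR : 1 ≤ cR)
    (hx : 0 < x) :
    ∃ Y : ℝ, 0 < Y ∧ G a r cA cR x Y < 0 := by
  have hcA0 : (0:ℝ) < cA := lt_of_lt_of_le one_pos hcA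
  have hcR0 : (0:ℝ) < cR := lt_of_lt_of_le one_pos hcR
  have ha0 : (0:ℝ) < a := lt_trans one_pos ha
  have hcx : 0 < cA * x := mul_pos hcA0 hx
  set K : ℝ := (cR - 1) * ((1 + cA * a * x) ^ 3 - (1 + cA * x) ^ 3) with hKdef
  clear_value K
  have hAB : 1 + cA * x < 1 + cA * a * x := by
    nlinarith [mul_pos (mul_pos hcA0 hx) (sub_pos.mpr ha)]
  have h0 : (0:ℝ) < 1 + cA * x := by linarith
  have hABc : (1 + cA * x) ^ 3 ≤ (1 + cA * a * x) ^ 3 := pow_le_pow_left₀ h0.le hAB.le 3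
  have hK : 0 ≤ K := by rw [hKdef]; exact mul_nonneg (by linarith) (by linarith)
  have hden : 0 < cR * (1 - r) := mul_pos hcR0 (by linarith)
  have hnum : 0 < cA * x * (a - 1) + K + 1 := by
    nlinarith [mul_pos hcx (sub_pos.mpr ha)]
  refine ⟨(cA * x * (a - 1) + K + 1) / (cR * (1 - r)), div_pos hnum hden, ?_⟩
  set Y : ℝ := (cA * x * (a - 1) + K + 1) / (cR * (1 - r)) with hYdef
  clear_value Y
  have hY0 : 0 < Y := hYdef ▸ div_pos hnum hden
  have hvu : (1 + cA * x + cR * Y) - (1 + cA * a * x + cR * r * Y) = K + 1 := by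
    have : cR * (1 - r) * Y = cA * x * (a - 1) + K + 1 := by
      rw [hYdef]; field_simp; exact div_self (sub_ne_zero.mpr (ne_of_gt hr1))
    linarith [this]
  set u : ℝ := 1 + cA * a * x + cR * r * Y with hu
  set v : ℝ := 1 + cA * x + cR * Y with hv
  clear_value u v
  have hu0 : 0 < u := by
    rw [hu]; nlinarith [mul_pos (mul_pos hcA0 ha0) hx, mul_pos (mul_pos hcR0 hr0) hY0]
  have hupows : u ^ 3 + (K + 1) ≤ v ^ 3 := by
    have hv3 : v = u + (K + 1) := by linarith
    rw [hv3]
    nlinarith [mul_nonneg (sq_nonneg u) (by linarith : (0:ℝ) ≤ K + 1),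
      mul_nonneg hu0.le (sq_nonneg (K + 1)),
      mul_nonneg (mul_nonneg (by linarith : (0:ℝ) ≤ K + 1) hK) (by linarith : (0:ℝ) ≤ K + 2)]
  have hpq : (1 + cR * r * Y) ^ 3 ≤ (1 + cR * Y) ^ 3 := by
    apply pow_le_pow_left₀ (by nlinarith [mul_pos (mul_pos hcR0 hr0) hY0])
    nlinarith [mul_pos (mul_pos hcR0 hY0) (sub_pos.mpr hr1)]
  have hw : (0:ℝ) ≤ cA - 1 := by linarith
  have hGval : G a r cA cR x Y
      = u ^ 3 - v ^ 3 + K + (cA - 1) * ((1 + cR * r * Y) ^ 3 - (1 + cR * Y) ^ 3) := by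
    simp only [G]
    rw [← hu, ← hv, ← hKdef]
  rw [hGval]
  have h2 : (cA - 1) * ((1 + cR * r * Y) ^ 3 - (1 + cR * Y) ^ 3) ≤ 0 :=
    mul_nonpos_of_nonneg_of_nonpos hw (by linarith)
  linarith

/-- If a function has negative derivative at a root, it is negative just to the right. -/
lemma right_neg {P : ℝ → ℝ} {m D : ℝ} (hd : HasDerivAt P D m) (hD : D < 0) (hm : P m = 0) :
    ∀ᶠ z in nhdsWithin m (Set.Ioi m), P z < 0 := by
  have h := hasDerivAt_iff_tendsto_slope.mp hd
  have h' : Filter.Tendsto (slope P m) (nhdsWithin m (Set.Ioi m)) (nhds D) :=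
    h.mono_left (nhdsWithin_mono _ (fun z hz => ne_of_gt hz))
  have h2 : ∀ᶠ z in nhdsWithin m (Set.Ioi m), slope P m z < 0 :=
    h'.eventually_lt_const hD
  filter_upwards [h2, self_mem_nhdsWithin] with z hz hzm
  have hpos : 0 < z - m := sub_pos.mpr hzm
  have hc : slope P m z * (z - m) = P z - P m := by
    rw [slope_def_field]
    field_simp [sub_ne_zero.mpr (ne_of_gt (Set.mem_Ioi.mp hzm))]
  nlinarith [mul_lt_mul_of_pos_right hz hpos]

/-- If a function has negative derivative at a root, it is positive just to the left. -/
lemma left_pos {P : ℝ → ℝ} {m D : ℝ} (hd : HasDerivAt P D m) (hD : D < 0) (hm : P m = 0) :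
    ∀ᶠ z in nhdsWithin m (Set.Iio m), 0 < P z := by
  have h := hasDerivAt_iff_tendsto_slope.mp hd
  have h' : Filter.Tendsto (slope P m) (nhdsWithin m (Set.Iio m)) (nhds D) :=
    h.mono_left (nhdsWithin_mono _ (fun z hz => ne_of_lt hz))
  have h2 : ∀ᶠ z in nhdsWithin m (Set.Iio m), slope P m z < 0 :=
    h'.eventually_lt_const hD
  filter_upwards [h2, self_mem_nhdsWithin] with z hz hzm
  have hneg : z - m < 0 := sub_neg.mpr hzm
  have hc : slope P m z * (z - m) = P z - P m := by
    rw [slope_def_field]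
    field_simp [sub_ne_zero.mpr (ne_of_lt (Set.mem_Iio.mp hzm))]
  nlinarith [mul_pos_of_neg_of_neg hz hneg]

/-- No two distinct positive roots. -/
lemma no_two_roots (a r cA cR x : ℝ)
    (ha : 1 < a) (hr0 : 0 < r) (hr1 : r < 1) (hcA : 1 ≤ cA) (hcR : 1 ≤ cR)
    (hx : 0 < x) {y1 y2 : ℝ} (hy1 : 0 < y1) (h12 : y1 < y2)
    (hr1' : G a r cA cR x y1 = 0) (hr2' : G a r cA cR x y2 = 0) : False := by
  set P : ℝ → ℝ := fun y' => G a r cA cR x y' with hP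
  have hy2 : 0 < y2 := hy1.trans h12
  have hd : ∀ t : ℝ, HasDerivAt P (Gd a r cA cR x t) t := fun t => hasDerivAt_G a r cA cR x t
  have hcont : Continuous P := by
    rw [continuous_iff_continuousAt]
    exact fun t => (hd t).continuousAt
  have hD1 : Gd a r cA cR x y1 < 0 := Gd_neg_at_root a r cA cR x y1 ha hr0 hr1 hcA hcR hx hy1 hr1'
  have hD2 : Gd a r cA cR x y2 < 0 := Gd_neg_at_root a r cA cR x y2 ha hr0 hr1 hcA hcR hx hy2 hr2'
  have e1 := right_neg (hd y1) hD1 hr1'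
  have e2 := left_pos (hd y2) hD2 hr2'
  obtain ⟨z1, hz1neg, hz1mem⟩ :=
    (e1.and (Ioo_mem_nhdsGT_of_mem (Set.mem_Ico.mpr ⟨le_refl y1, h12⟩))).exists
  obtain ⟨z2, hz2pos, hz2mem⟩ :=
    (e2.and (Ioo_mem_nhdsLT_of_mem (Set.mem_Ioc.mpr ⟨hz1mem.2, le_refl y2⟩))).exists
  -- z1 ∈ Ioo y1 y2, P z1 < 0 ; z2 ∈ Ioo z1 y2, P z2 > 0
  have hz12 : z1 < z2 := hz2mem.1
  set S : Set ℝ := Set.Icc z1 z2 ∩ {t | P t ≤ 0} with hS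
  have hSclosed : IsClosed S := isClosed_Icc.inter (isClosed_le hcont continuous_const)
  have hSne : S.Nonempty := ⟨z1, Set.mem_Icc.mpr ⟨le_refl z1, hz12.le⟩, hz1neg.le⟩
  have hSbdd : BddAbove S := ⟨z2, fun t ht => ht.1.2⟩
  have hmS : sSup S ∈ S := hSclosed.csSup_mem hSne hSbdd
  set m : ℝ := sSup S with hm
  have hmz2 : m < z2 := lt_of_le_of_ne hmS.1.2 (fun hEq => by
    have h' : P m ≤ 0 := hmS.2
    rw [hEq] at h'
    exact absurd hz2pos (not_lt.mpr h'))
  have hmz1 : z1 ≤ m := hmS.1.1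
  have hpos : ∀ t, m < t → t ≤ z2 → 0 < P t := by
    intro t hmt htz2
    by_contra hcon
    push_neg at hcon
    have htS : t ∈ S := ⟨Set.mem_Icc.mpr ⟨hmz1.trans hmt.le, htz2⟩, hcon⟩
    exact absurd (le_csSup hSbdd htS) (not_le.mpr hmt)
  have hPm : P m = 0 := by
    rcases lt_or_eq_of_le (show P m ≤ 0 from hmS.2) with hlt | hEq
    · exfalso
      have hev : ∀ᶠ z in nhds m, P z < 0 := hcont.continuousAt.eventually_lt_const hlt
      have hev' : ∀ᶠ z in nhdsWithin m (Set.Ioi m), P z < 0 := hev.filter_mono nhdsWithin_le_nhds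
      obtain ⟨z, hzneg, hzmem⟩ :=
        (hev'.and (Ioo_mem_nhdsGT_of_mem (Set.mem_Ico.mpr ⟨le_refl m, hmz2⟩))).exists
      exact absurd (hpos z hzmem.1 hzmem.2.le) (not_lt.mpr hzneg.le)
    · exact hEq
  have hm0 : 0 < m := lt_of_lt_of_le (hy1.trans hz1mem.1) hmz1
  have hDm : Gd a r cA cR x m < 0 := Gd_neg_at_root a r cA cR x m ha hr0 hr1 hcA hcR hx hm0 hPm
  have e3 := right_neg (hd m) hDm hPm
  obtain ⟨z, hzneg, hzmem⟩ :=
    (e3.and (Ioo_mem_nhdsGT_of_mem (Set.mem_Ico.mpr ⟨le_refl m, hmz2⟩))).exists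
  exact absurd (hpos z hzmem.1 hzmem.2.le) (not_lt.mpr hzneg.le)

/-- For fixed `x > 0`, the cubic `y ↦ G(x,y)` has exactly one positive root `y*`,
and its derivative at `y*` is negative. -/
theorem unique_positive_root_in_y (a r cA cR x : ℝ)
    (ha : 1 < a) (hr0 : 0 < r) (hr1 : r < 1) (hcA : 1 ≤ cA) (hcR : 1 ≤ cR)
    (hx : 0 < x) :
    ∃ y : ℝ, (0 < y ∧ G a r cA cR x y = 0) ∧
      (∀ y' : ℝ, 0 < y' → G a r cA cR x y' = 0 → y' = y) ∧
      deriv (fun y' => G a r cA cR x y') y < 0 := by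
  obtain ⟨Y, hY0, hYneg⟩ := G_neg_at_large a r cA cR x ha hr0 hr1 hcA hcR hx
  have hpos0 := G_pos_at_zero a r cA cR x ha hcA hcR hx
  have hcont : Continuous (fun y' => G a r cA cR x y') := by
    rw [continuous_iff_continuousAt]
    exact fun t => (hasDerivAt_G a r cA cR x t).continuousAt
  have hivt := intermediate_value_Icc' hY0.le hcont.continuousOn
  have h0mem : (0:ℝ) ∈ Set.Icc (G a r cA cR x Y) (G a r cA cR x 0) :=
    Set.mem_Icc.mpr ⟨hYneg.le, hpos0.le⟩
  obtain ⟨y, hyIcc, hy0⟩ := hivt h0mem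
  have hy0' : G a r cA cR x y = 0 := hy0
  have hypos : 0 < y := by
    rcases lt_or_eq_of_le hyIcc.1 with h | h
    · exact h
    · exfalso; rw [← h] at hy0'; linarith
  refine ⟨y, ⟨hypos, hy0'⟩, ?_, ?_⟩
  · intro y' hy' hroot'
    by_contra hne
    rcases lt_or_gt_of_ne hne with h | h
    · exact no_two_roots a r cA cR x ha hr0 hr1 hcA hcR hx hy' h hroot' hy0'
    · exact no_two_roots a r cA cR x ha hr0 hr1 hcA hcR hx hypos h hy0' hroot'
  · rw [(hasDerivAt_G a r cA cR x y).deriv]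
    exact Gd_neg_at_root a r cA cR x y ha hr0 hr1 hcA hcR hx hypos hy0'
end

section
/- Let a > 1, 0 < r < 1 and c_A, c_R ≥ 1 be real numbers, and fix y > 0. Consider the cubic polynomial Q(x) = G(x, y) in the variable x. Then Q has exactly one positive root x*, and the derivative satisfies Q′(x*) > 0. -/
/-- A cubic `A x³ + B x² + C x + D` with `A > 0`, `D < 0` and either `B ≥ 0` or `C ≤ 0`
has a unique positive root, at which its derivative `3Ax² + 2Bx + C` is positive. -/
lemma cubic_key (A B C D : ℝ) (hA : 0 < A) (hD : D < 0) (hBC : 0 ≤ B ∨ C ≤ 0) :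
    ∃ x : ℝ, (0 < x ∧ A*x^3 + B*x^2 + C*x + D = 0) ∧
      (∀ x' : ℝ, 0 < x' → A*x'^3 + B*x'^2 + C*x'+ D = 0 → x' = x) ∧
      0 < 3*A*x^2 + 2*B*x + C := by
  set f : ℝ → ℝ := fun x => A*x^3 + B*x^2 + C*x + D with hf
  -- existence of a positive root by IVT
  obtain ⟨x, hxI, hfx⟩ : ∃ x, x ∈ Set.Ioo (0:ℝ) (max 1 ((|B|+|C|+|D|+1)/A)) ∧ f x = 0 := by
    set M : ℝ := max 1 ((|B|+|C|+|D|+1)/A) with hM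
    have hM1 : (1:ℝ) ≤ M := le_max_left _ _
    have hM0 : (0:ℝ) ≤ M := by linarith
    have hMA : |B|+|C|+|D|+1 ≤ A*M := by
      have h := le_max_right (1:ℝ) ((|B|+|C|+|D|+1)/A)
      calc |B|+|C|+|D|+1 = A * ((|B|+|C|+|D|+1)/A) := by field_simp
        _ ≤ A * M := by
            apply mul_le_mul_of_nonneg_left h hA.le
    have hfM : 0 < f M := by
      have hB1 := neg_abs_le B
      have hC1 := neg_abs_le C
      have hD1 := neg_abs_le D
      have habs : (0:ℝ) ≤ |B| := abs_nonneg B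
      have habsC : (0:ℝ) ≤ |C| := abs_nonneg C
      have habsD : (0:ℝ) ≤ |D| := abs_nonneg D
      have h2 : M ≤ M^2 := by nlinarith
      have key : M^2 * (A*M - |B| - |C| - |D|) ≤ f M := by
        simp only [hf]
        nlinarith [mul_le_mul_of_nonneg_right hB1 (sq_nonneg M),
          mul_le_mul_of_nonneg_right hC1 hM0,
          mul_le_mul_of_nonpos_left h2 (neg_nonpos.2 habsC),
          mul_le_mul_of_nonpos_left h2 (neg_nonpos.2 habsD),
          mul_le_mul_of_nonneg_right hD1 hM0]
      nlinarith [sq_nonneg M]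
    have hcont : ContinuousOn f (Set.Icc 0 M) := by fun_prop
    have hf0 : f 0 = D := by simp [hf]
    have h0mem : (0:ℝ) ∈ Set.Ioo (f 0) (f M) := by
      rw [hf0]; exact ⟨hD, hfM⟩
    have := intermediate_value_Ioo hM0 hcont
    obtain ⟨x, hx, hfx⟩ := this h0mem
    exact ⟨x, hx, hfx⟩
  have hx0 : 0 < x := hxI.1
  -- facts at a root
  have q_pos : ∀ z : ℝ, 0 < z → f z = 0 → 0 < A*z^2 + B*z + C := by
    intro z hz hfz
    have e1 : z*(A*z^2 + B*z + C) = -D := by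
      simp only [hf] at hfz; linear_combination hfz
    nlinarith [e1]
  have lin_pos : ∀ z : ℝ, 0 < z → f z = 0 → 0 < 2*A*z + B := by
    intro z hz hfz
    rcases hBC with hB | hC
    · nlinarith [mul_pos hA hz]
    · have e1 : z*(A*z^2 + B*z + C) = -D := by
        simp only [hf] at hfz; linear_combination hfz
      have hAB : 0 < A*z + B := by
        nlinarith [mul_pos hz hz, mul_nonneg (neg_nonneg.2 hC) hz.le]
      nlinarith [mul_pos hA hz]
  -- no two distinct positive roots
  have no_two : ∀ x1 x2 : ℝ, 0 < x1 → x1 < x2 → f x1 = 0 → f x2 = 0 → False := by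
    intro x1 x2 hx1 hlt h1 h2
    have hx2 : 0 < x2 := lt_trans hx1 hlt
    have hq := q_pos x1 hx1 h1
    have h3 : (x2 - x1) * (A*(x1^2+x1*x2+x2^2) + B*(x1+x2) + C) = 0 := by
      simp only [hf] at h1 h2; linear_combination h2 - h1
    have hne : x2 - x1 ≠ 0 := by linarith
    have e2 : A*(x1^2+x1*x2+x2^2) + B*(x1+x2) + C = 0 :=
      (mul_eq_zero.1 h3).resolve_left (fun h => hne h)
    have hpos : 0 < A*x1 + A*x2 + B := by
      rcases hBC with hB | hC
      · nlinarith [mul_pos hA hx1, mul_pos hA hx2]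
      · have e1 : x1*(A*x1^2 + B*x1 + C) = -D := by
          simp only [hf] at h1; linear_combination h1
        have hAB : 0 < A*x1 + B := by
          nlinarith [mul_pos hx1 hx1, mul_nonneg (neg_nonneg.2 hC) hx1.le]
        nlinarith [mul_pos hA hx2]
    have expand : A*(x1^2+x1*x2+x2^2) + B*(x1+x2) + C
        = (A*x1^2 + B*x1 + C) + x2*(A*x1 + A*x2 + B) := by ring
    rw [expand] at e2
    nlinarith [mul_pos hx2 hpos]
  refine ⟨x, ⟨hx0, hfx⟩, ?_, ?_⟩
  · intro x' hx' hfx'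
    rcases lt_trichotomy x' x with h | h | h
    · exact absurd (no_two x' x hx' h hfx' hfx) (by simp)
    · exact h
    · exact absurd (no_two x x' hx0 h hfx hfx') (by simp)
  · have hq := q_pos x hx0 hfx
    have hl := lin_pos x hx0 hfx
    nlinarith [mul_pos hx0 hl]

set_option maxHeartbeats 1000000 in
/-- For fixed `y > 0`, the cubic `x ↦ G(x,y)` has exactly one positive root `x*`,
and its derivative at `x*` is positive. -/
theorem unique_positive_root_in_x (a r cA cR y : ℝ)
    (ha : 1 < a) (hr0 : 0 < r) (hr1 : r < 1) (hcA : 1 ≤ cA) (hcR : 1 ≤ cR)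
    (hy : 0 < y) :
    ∃ x : ℝ, (0 < x ∧ G a r cA cR x y = 0) ∧
      (∀ x' : ℝ, 0 < x' → G a r cA cR x' y = 0 → x' = x) ∧
      0 < deriv (fun x' => G a r cA cR x' y) x := by
  have hcA0 : (0:ℝ) < cA := by linarith
  have hcR0 : (0:ℝ) < cR := by linarith
  set A := cR * cA^3 * (a^3 - 1) with hA_def
  set B := 3*cA^2*cR*(a^2*(1+r*y) - (1+y)) with hB_def
  set C := 3*cA*(a*((1+cR*r*y)^2+cR-1) - ((1+cR*y)^2+cR-1)) with hC_def
  set D := cA*((1+cR*r*y)^3 - (1+cR*y)^3) with hD_def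
  -- the polynomial expansion of G in x
  have hGeq : ∀ t : ℝ, G a r cA cR t y = A*t^3 + B*t^2 + C*t + D := by
    intro t
    rw [hA_def, hB_def, hC_def, hD_def]
    unfold G
    ring
  have hApos : 0 < A := by
    rw [hA_def]
    have : (0:ℝ) < a^3 - 1 := by nlinarith
    positivity
  have hDneg : D < 0 := by
    rw [hD_def]
    have h1 : cR*r*y < cR*y := by nlinarith [mul_pos (mul_pos hcR0 hy) (sub_pos.2 hr1)]
    have h2 : (0:ℝ) < 1 + cR*r*y := by positivity
    have h2b : (0:ℝ) < 1 + cR*y := by positivity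
    have h3 : (1+cR*r*y)^3 < (1+cR*y)^3 := by
      nlinarith [mul_pos (sub_pos.2 h1)
        (by nlinarith [mul_pos h2 h2b, sq_nonneg (1+cR*r*y), sq_nonneg (1+cR*y)] :
          (0:ℝ) < (1+cR*r*y)^2 + (1+cR*r*y)*(1+cR*y) + (1+cR*y)^2)]
    nlinarith
  have hdisj : 0 ≤ B ∨ C ≤ 0 := by
    rcases le_or_gt 0 B with hB | hB
    · exact Or.inl hB
    · right
      rw [hB_def] at hB
      have hBlt : a^2*(1+r*y) < 1+y := by
        have hpos3 : (0:ℝ) < 3*cA^2*cR := by positivity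
        nlinarith
      set P := (1+cR*r*y)^2+cR-1 with hP_def
      set Qq := (1+cR*y)^2+cR-1 with hQ_def
      have hcry : (0:ℝ) < cR*r*y := by positivity
      have hcy : (0:ℝ) < cR*y := by positivity
      have hPpos : 0 < P := by rw [hP_def]; nlinarith [sq_nonneg (cR*r*y)]
      have hQpos : 0 < Qq := by rw [hQ_def]; nlinarith [sq_nonneg (cR*y)]
      have hQP : P ≤ Qq := by
        have hidQP : Qq - P = (cR*y - cR*r*y)*(2 + cR*y + cR*r*y) := by
          rw [hP_def, hQ_def]; ring
        have hnn : (0:ℝ) ≤ cR*y - cR*r*y := by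
          nlinarith [mul_nonneg (mul_nonneg hcR0.le hy.le) (by linarith : (0:ℝ) ≤ 1-r)]
        nlinarith [mul_nonneg hnn (by linarith : (0:ℝ) ≤ 2 + cR*y + cR*r*y)]
      have hfac : (0:ℝ) < 2 + cR*y*(1+r) := by nlinarith
      have hF : (0:ℝ) < cR*(1+r*y)*(2+cR*y*(1+r)) := by
        apply mul_pos (mul_pos hcR0 (by nlinarith : (0:ℝ) < 1+r*y)) hfac
      have hT : 0 ≤ 2*cR*(1+r*y)*(2+cR*y*(1+r)) - P := by
        have hid2 : 2*cR*(1+r*y)*(2+cR*y*(1+r)) - P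
            = 3*cR + 2*cR^2*y + 2*cR^2*r*y + 2*cR*r*y + 2*cR^2*r*y^2 + cR^2*r^2*y^2 := by
          rw [hP_def]; ring
        rw [hid2]
        have t1 : (0:ℝ) ≤ cR^2*y := by positivity
        have t2 : (0:ℝ) ≤ cR^2*r*y := by positivity
        have t3 : (0:ℝ) ≤ cR*r*y := by positivity
        have t4 : (0:ℝ) ≤ cR^2*r*y^2 := by positivity
        have t5 : (0:ℝ) ≤ cR^2*r^2*y^2 := by positivity
        linarith
      have hE : 0 ≤ cR*(1+r*y)*(2+cR*y*(1+r))*(Qq+P) - P^2 := by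
        have step1 : cR*(1+r*y)*(2+cR*y*(1+r)) * (2*P)
            ≤ cR*(1+r*y)*(2+cR*y*(1+r)) * (Qq+P) :=
          mul_le_mul_of_nonneg_left (by linarith) hF.le
        have step2 : 0 ≤ P*(2*cR*(1+r*y)*(2+cR*y*(1+r)) - P) := mul_nonneg hPpos.le hT
        nlinarith [step1, step2]
      have hkey : (1+y)*P^2 ≤ (1+r*y)*Qq^2 := by
        have hid3 : (1+r*y)*Qq^2 - (1+y)*P^2
            = (1-r)*y*(cR*(1+r*y)*(2+cR*y*(1+r))*(Qq+P) - P^2) := by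
          rw [hP_def, hQ_def]; ring
        nlinarith [mul_nonneg (mul_nonneg (by linarith : (0:ℝ) ≤ 1-r) hy.le) hE]
      have haP : a*P ≤ Qq := by
        have haPpos : 0 < a*P := mul_pos (by linarith) hPpos
        have hsq : (a*P)^2*(1+r*y) ≤ (1+r*y)*Qq^2 := by
          nlinarith [sq_nonneg P, mul_pos hPpos hPpos]
        have hry : (0:ℝ) < 1+r*y := by positivity
        have hsq2 : (a*P)^2 ≤ Qq^2 := by nlinarith
        nlinarith [hsq2, haPpos, hQpos]
      rw [hC_def]
      nlinarith [mul_nonneg (by positivity : (0:ℝ) ≤ 3*cA) (by linarith : (0:ℝ) ≤ Qq - a*P)]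
  obtain ⟨x, ⟨hx0, hroot⟩, huniq, hder⟩ := cubic_key A B C D hApos hDneg hdisj
  have hfunG : (fun x' => G a r cA cR x' y) = (fun x' => A*x'^3 + B*x'^2 + C*x' + D) :=
    funext fun t => hGeq t
  have hd : HasDerivAt (fun x' : ℝ => A*x'^3 + B*x'^2 + C*x' + D) (3*A*x^2 + 2*B*x + C) x := by
    have h1 : HasDerivAt (fun x' : ℝ => A*x'^3) (A*(3*x^2)) x := by
      have h := (hasDerivAt_pow 3 x).const_mul A
      exact h.congr_deriv (by norm_num)
    have h2 : HasDerivAt (fun x' : ℝ => B*x'^2) (B*(2*x)) x := by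
      have h := (hasDerivAt_pow 2 x).const_mul B
      exact h.congr_deriv (by push_cast; norm_num)
    have h3 : HasDerivAt (fun x' : ℝ => C*x') (C*1) x := by
      have := (hasDerivAt_id x).const_mul C
      simpa using this
    have := ((h1.add h2).add h3).add_const D
    exact this.congr_deriv (by ring)
  refine ⟨x, ⟨hx0, by rw [hGeq x]; exact hroot⟩, ?_, ?_⟩
  · intro x' hx' hGx'
    exact huniq x' hx' (by rw [← hGeq x']; exact hGx')
  · rw [hfunG, hd.deriv]
    exact hder
end

section
/- Let a > 1, 0 < r < 1 and c_A, c_R ≥ 1 be real numbers. There exists a function f : (0,∞) → (0,∞) which is differentiable and strictly increasing, such that for all x, y > 0: G(x, y) = 0 if and only if y = f(x); moreover G(x, y) > 0 if and only if y < f(x), and G(x, y) < 0 if and only if y > f(x). -/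
/-- partial derivative of G in x -/
def Gx (a r cA cR x y : ℝ) : ℝ :=
  3 * (cA * a) * (1 + cA * a * x + cR * r * y) ^ 2 - 3 * cA * (1 + cA * x + cR * y) ^ 2
    + (cR - 1) * (3 * (cA * a) * (1 + cA * a * x) ^ 2 - 3 * cA * (1 + cA * x) ^ 2)

/-- partial derivative of G in y -/
def Gy (a r cA cR x y : ℝ) : ℝ :=
  3 * (cR * r) * (1 + cA * a * x + cR * r * y) ^ 2 - 3 * cR * (1 + cA * x + cR * y) ^ 2
    + (cA - 1) * (3 * (cR * r) * (1 + cR * r * y) ^ 2 - 3 * cR * (1 + cR * y) ^ 2)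

lemma hasDerivAt_line (a r cA cR p q c m x : ℝ) :
    HasDerivAt (fun ξ => G a r cA cR (p + q * ξ) (c + m * ξ))
      (q * Gx a r cA cR (p + q * x) (c + m * x) + m * Gy a r cA cR (p + q * x) (c + m * x)) x := by
  have key : ∀ A B : ℝ, HasDerivAt (fun ξ : ℝ => (1 + A * (p + q * ξ) + B * (c + m * ξ)) ^ 3)
      (3 * (A * q + B * m) * (1 + A * (p + q * x) + B * (c + m * x)) ^ 2) x := by
    intro A B
    have h0 : HasDerivAt (fun ξ : ℝ => (1 + A * p + B * c) + (A * q + B * m) * ξ)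
        (A * q + B * m) x := by
      simpa using ((hasDerivAt_id x).const_mul (A * q + B * m)).const_add (1 + A * p + B * c)
    have h1 : HasDerivAt (fun ξ : ℝ => 1 + A * (p + q * ξ) + B * (c + m * ξ)) (A * q + B * m) x := by
      convert h0 using 2 with ξ
      ring
    have := h1.fun_pow 3
    refine this.congr_deriv ?_
    rw [show (3:ℕ) - 1 = 2 from rfl]; push_cast; ring
  have h2 : ∀ A : ℝ, HasDerivAt (fun ξ : ℝ => (1 + A * (p + q * ξ)) ^ 3)
      (3 * (A * q) * (1 + A * (p + q * x)) ^ 2) x := by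
    intro A
    have := key A 0
    convert this using 2 with ξ <;> ring
  have h3 : ∀ B : ℝ, HasDerivAt (fun ξ : ℝ => (1 + B * (c + m * ξ)) ^ 3)
      (3 * (B * m) * (1 + B * (c + m * x)) ^ 2) x := by
    intro B
    have := key 0 B
    convert this using 2 with ξ <;> ring
  have H := ((((key (cA * a) (cR * r)).sub (key cA cR)).add
      (((h2 (cA * a)).sub (h2 cA)).const_mul (cR - 1))).add
      (((h3 (cR * r)).sub (h3 cR)).const_mul (cA - 1)))
  have hv : q * Gx a r cA cR (p + q * x) (c + m * x) + m * Gy a r cA cR (p + q * x) (c + m * x)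
      = (3 * (cA * a * q + cR * r * m) * (1 + cA * a * (p + q * x) + cR * r * (c + m * x)) ^ 2 -
          3 * (cA * q + cR * m) * (1 + cA * (p + q * x) + cR * (c + m * x)) ^ 2 +
        (cR - 1) * (3 * (cA * a * q) * (1 + cA * a * (p + q * x)) ^ 2 - 3 * (cA * q) * (1 + cA * (p + q * x)) ^ 2) +
      (cA - 1) * (3 * (cR * r * m) * (1 + cR * r * (c + m * x)) ^ 2 - 3 * (cR * m) * (1 + cR * (c + m * x)) ^ 2)) := by
    simp only [Gx, Gy]; ring
  rw [hv]
  exact H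

lemma hasDerivAt_y (a r cA cR x y : ℝ) :
    HasDerivAt (fun η => G a r cA cR x η) (Gy a r cA cR x y) y := by
  have := hasDerivAt_line a r cA cR x 0 0 1 y
  simpa using this

/-- eventual sign behaviour near a point with positive derivative -/
lemma eventually_pos_right {h : ℝ → ℝ} {d z : ℝ} (hd : HasDerivAt h d z) (hd0 : 0 < d)
    (hz : h z = 0) : ∀ᶠ x in nhdsWithin z (Set.Ioi z), 0 < h x := by
  have hs := hasDerivAt_iff_tendsto_slope.mp hd
  have hev : ∀ᶠ x in nhdsWithin z {z}ᶜ, 0 < slope h z x :=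
    hs.eventually (eventually_gt_nhds hd0)
  have hev' : ∀ᶠ x in nhdsWithin z (Set.Ioi z), 0 < slope h z x :=
    hev.filter_mono (nhdsWithin_mono z (fun x hx => ne_of_gt hx))
  filter_upwards [hev', self_mem_nhdsWithin] with x hx hx'
  have hq : 0 < (h x - h z) / (x - z) := by rwa [slope_def_field] at hx
  have hxz : 0 < x - z := sub_pos.mpr hx'
  rcases div_pos_iff.mp hq with ⟨h1, _⟩ | ⟨_, h2⟩
  · linarith
  · linarith

lemma eventually_neg_left {h : ℝ → ℝ} {d z : ℝ} (hd : HasDerivAt h d z) (hd0 : 0 < d)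
    (hz : h z = 0) : ∀ᶠ x in nhdsWithin z (Set.Iio z), h x < 0 := by
  have hs := hasDerivAt_iff_tendsto_slope.mp hd
  have hev : ∀ᶠ x in nhdsWithin z {z}ᶜ, 0 < slope h z x :=
    hs.eventually (eventually_gt_nhds hd0)
  have hev' : ∀ᶠ x in nhdsWithin z (Set.Iio z), 0 < slope h z x :=
    hev.filter_mono (nhdsWithin_mono z (fun x hx => ne_of_lt hx))
  filter_upwards [hev', self_mem_nhdsWithin] with x hx hx'
  have hq : 0 < (h x - h z) / (x - z) := by rwa [slope_def_field] at hx
  have hxz : x - z < 0 := sub_neg.mpr hx'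
  rcases div_pos_iff.mp hq with ⟨_, h2⟩ | ⟨h1, _⟩
  · linarith
  · linarith


set_option maxHeartbeats 1000000 in
-- abstract key lemma 1
lemma keyY_abs (r w t P Q : ℝ) (hr0 : 0 < r) (hr1 : r < 1) (hw : 0 ≤ w) (ht : 0 < t)
    (hvQ : 1 + t ≤ Q) (hP1 : 1 ≤ P)
    (h1 : P^3 + w*(1+r*t)^3 ≤ Q^3 + w*(1+t)^3) :
    r*P^2 + w*r*(1+r*t)^2 < Q^2 + w*(1+t)^2 := by
  have hQ1 : 1 < Q := by nlinarith
  have hP0 : 0 < P := by linarith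
  by_cases hPQ : P ≤ Q
  · have e0 : P^2 ≤ Q^2 := pow_le_pow_left₀ hP0.le hPQ 2
    have e0' : 0 < (1-r)*P^2 := mul_pos (by linarith) (pow_pos hP0 2)
    have e1 : r*P^2 < Q^2 := by nlinarith
    have e2 : r*(1+r*t)^2 ≤ (1+t)^2 := by
      nlinarith [mul_nonneg (show (0:ℝ) ≤ 1-r by linarith) (sq_nonneg (1+r*t)),
        mul_nonneg (mul_nonneg hr0.le ht.le) (show (0:ℝ) ≤ 1-r by linarith),
        mul_nonneg (mul_nonneg (mul_nonneg hr0.le ht.le) ht.le) (show (0:ℝ) ≤ 1-r*r by nlinarith)]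
    nlinarith [mul_le_mul_of_nonneg_left e2 hw]
  · push_neg at hPQ
    have hB : 0 < P^3 - Q^3 := by
      have := pow_lt_pow_left₀ hPQ (by linarith : (0:ℝ) ≤ Q) (by norm_num : 3 ≠ 0)
      linarith
    have hwB : P^3 - Q^3 ≤ w*((1+t)^3 - (1+r*t)^3) := by linarith
    have hvV3 : 0 < (1+t)^3 - (1+r*t)^3 := by nlinarith
    have hvrV : 0 < (1+t)^2 - r*(1+r*t)^2 := by
      nlinarith [mul_nonneg (show (0:ℝ) ≤ 1-r by linarith) (sq_nonneg (1+r*t)),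
        mul_nonneg (mul_nonneg hr0.le ht.le) (show (0:ℝ) ≤ 1-r by linarith),
        mul_nonneg (mul_nonneg (mul_nonneg hr0.le ht.le) ht.le) (show (0:ℝ) ≤ 1-r*r by nlinarith)]
    have hPQ0 : 0 < P + Q := by linarith
    have i1 : r*((P+Q)*(1+t)) ≤ P^2+P*Q+Q^2 := by
      nlinarith [mul_pos hPQ0 (show (0:ℝ) < 1+t by linarith),
        mul_le_mul_of_nonneg_left hvQ hPQ0.le]
    have i3 : r*t*(P+Q) ≤ P^2+P*Q+Q^2 := by
      have hrtQ : r*t < Q := by nlinarith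
      nlinarith [mul_le_mul_of_nonneg_right hrtQ.le hPQ0.le]
    have T1 := mul_le_mul_of_nonneg_left i1 (show (0:ℝ) ≤ t*(1+t) by positivity)
    have T2 := mul_le_mul_of_nonneg_left i1 (show (0:ℝ) ≤ t*(1+r*t) by positivity)
    have T3 := mul_le_mul_of_nonneg_left i3 (show (0:ℝ) ≤ (1+r*t)^2 by positivity)
    have I1' : r*t*(P+Q)*((1+t)^2+(1+t)*(1+r*t)+(1+r*t)^2)
        ≤ (P^2+P*Q+Q^2)*(t*((1+t)+(1+r*t))+(1+r*t)^2) := by linarith [T1, T2, T3]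
    have m1 := mul_le_mul_of_nonneg_left I1' (show (0:ℝ) ≤ P - Q by linarith)
    have m2 : 0 < t*((1+t)^2+(1+t)*(1+r*t)+(1+r*t)^2)*((1-r)*Q^2) := by
      have h3 : 0 < (1-r)*Q^2 := mul_pos (by linarith) (pow_pos (by linarith) 2)
      have h2 : 0 < (1+t)^2+(1+t)*(1+r*t)+(1+r*t)^2 := by positivity
      positivity
    have hN : 0 < t*(Q^2-r*P^2)*((1+t)^2+(1+t)*(1+r*t)+(1+r*t)^2)
        + (P^3-Q^3)*(t*((1+t)+(1+r*t))+(1+r*t)^2) := by linarith [m1, m2]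
    have hT : 0 < (Q^2-r*P^2)*((1+t)^3-(1+r*t)^3) + (P^3-Q^3)*((1+t)^2-r*(1+r*t)^2) := by
      have hTN : (Q^2-r*P^2)*((1+t)^3-(1+r*t)^3) + (P^3-Q^3)*((1+t)^2-r*(1+r*t)^2)
          = (1-r)*(t*(Q^2-r*P^2)*((1+t)^2+(1+t)*(1+r*t)+(1+r*t)^2)
            + (P^3-Q^3)*(t*((1+t)+(1+r*t))+(1+r*t)^2)) := by ring
      rw [hTN]
      exact mul_pos (by linarith) hN
    have hsum : 0 < ((1+t)^3-(1+r*t)^3) * ((Q^2-r*P^2) + w*((1+t)^2-r*(1+r*t)^2)) := by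
      have := mul_le_mul_of_nonneg_right hwB hvrV.le
      nlinarith [this, hT]
    rcases mul_pos_iff.mp hsum with ⟨_, h⟩ | ⟨h, _⟩
    · nlinarith [h]
    · linarith

set_option maxHeartbeats 1000000 in
-- abstract key lemma 2
lemma keyX_abs (a z s P Q : ℝ) (ha : 1 < a) (hz : 0 ≤ z) (hs : 0 < s)
    (hUP : 1 + a*s ≤ P) (hQ1 : 1 ≤ Q)
    (h1 : Q^3 + z*(1+s)^3 ≤ P^3 + z*(1+a*s)^3) :
    Q^2 + z*(1+s)^2 < a*P^2 + z*a*(1+a*s)^2 := by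
  have hP1 : 1 < P := by nlinarith
  have hQ0 : 0 < Q := by linarith
  have hzuU : z*(1+s)^2 ≤ z*a*(1+a*s)^2 := by
    have hle : (1+s:ℝ) ≤ 1+a*s := by nlinarith
    have hsq : (1+s)^2 ≤ (1+a*s)^2 := pow_le_pow_left₀ (by linarith) hle 2
    have : (1+s)^2 ≤ a*(1+a*s)^2 := by nlinarith [sq_nonneg (1+a*s)]
    calc z*(1+s)^2 ≤ z*(a*(1+a*s)^2) := mul_le_mul_of_nonneg_left this hz
      _ = z*a*(1+a*s)^2 := by ring
  by_cases hPQ : Q ≤ P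
  · have e0 : Q^2 ≤ P^2 := pow_le_pow_left₀ hQ0.le hPQ 2
    have e0' : 0 < (a-1)*P^2 := mul_pos (by linarith) (pow_pos (by linarith) 2)
    nlinarith
  · push_neg at hPQ
    have hB : 0 < Q^3 - P^3 := by
      have := pow_lt_pow_left₀ hPQ (by linarith : (0:ℝ) ≤ P) (by norm_num : 3 ≠ 0)
      linarith
    have hzB : Q^3 - P^3 ≤ z*((1+a*s)^3 - (1+s)^3) := by linarith
    have hUu3 : 0 < (1+a*s)^3 - (1+s)^3 := by nlinarith
    have haU : 0 < a*(1+a*s)^2 - (1+s)^2 := by nlinarith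
    have hPQ0 : 0 < Q + P := by linarith
    have i1 : (Q+P)*(1+a*s) ≤ Q^2+Q*P+P^2 := by
      nlinarith [mul_le_mul_of_nonneg_left hUP hPQ0.le, sq_nonneg Q]
    have i3 : s*(Q+P) ≤ Q^2+Q*P+P^2 := by
      have hsQ : s < Q := by nlinarith
      nlinarith [mul_le_mul_of_nonneg_right hsQ.le hPQ0.le]
    have T1 := mul_le_mul_of_nonneg_left i1 (show (0:ℝ) ≤ s*(1+a*s) by positivity)
    have T2 := mul_le_mul_of_nonneg_left i1 (show (0:ℝ) ≤ s*(1+s) by positivity)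
    have T3 := mul_le_mul_of_nonneg_left i3 (show (0:ℝ) ≤ (1+s)^2 by positivity)
    have T3' : (Q^2+Q*P+P^2)*(1+s)^2 ≤ (Q^2+Q*P+P^2)*(1+a*s)^2 := by
      have hle : (1+s:ℝ) ≤ 1+a*s := by nlinarith
      have h4 : (1+s)^2 ≤ (1+a*s)^2 := pow_le_pow_left₀ (by linarith) hle 2
      have h5 : (0:ℝ) ≤ Q^2+Q*P+P^2 := by positivity
      exact mul_le_mul_of_nonneg_left h4 h5
    have I2' : s*(Q+P)*((1+a*s)^2+(1+a*s)*(1+s)+(1+s)^2)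
        ≤ (Q^2+Q*P+P^2)*(s*((1+a*s)+(1+s))+(1+a*s)^2) := by linarith [T1, T2, T3, T3']
    have m1 := mul_le_mul_of_nonneg_left I2' (show (0:ℝ) ≤ Q - P by linarith)
    have m2 : 0 < s*((1+a*s)^2+(1+a*s)*(1+s)+(1+s)^2)*((a-1)*P^2) := by
      have h3 : 0 < (a-1)*P^2 := mul_pos (by linarith) (pow_pos (by linarith) 2)
      have h2 : 0 < (1+a*s)^2+(1+a*s)*(1+s)+(1+s)^2 := by positivity
      positivity
    have hN : 0 < s*(a*P^2-Q^2)*((1+a*s)^2+(1+a*s)*(1+s)+(1+s)^2)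
        + (Q^3-P^3)*(s*((1+a*s)+(1+s))+(1+a*s)^2) := by linarith [m1, m2]
    have hT : 0 < (a*P^2-Q^2)*((1+a*s)^3-(1+s)^3) + (Q^3-P^3)*(a*(1+a*s)^2-(1+s)^2) := by
      have hTN : (a*P^2-Q^2)*((1+a*s)^3-(1+s)^3) + (Q^3-P^3)*(a*(1+a*s)^2-(1+s)^2)
          = (a-1)*(s*(a*P^2-Q^2)*((1+a*s)^2+(1+a*s)*(1+s)+(1+s)^2)
            + (Q^3-P^3)*(s*((1+a*s)+(1+s))+(1+a*s)^2)) := by ring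
      rw [hTN]
      exact mul_pos (by linarith) hN
    have hsum : 0 < ((1+a*s)^3-(1+s)^3) * ((a*P^2-Q^2) + z*(a*(1+a*s)^2-(1+s)^2)) := by
      have := mul_le_mul_of_nonneg_right hzB haU.le
      nlinarith [this, hT]
    rcases mul_pos_iff.mp hsum with ⟨_, h⟩ | ⟨h, _⟩
    · nlinarith [h]
    · linarith

lemma Gy_neg {a r cA cR x y : ℝ} (ha : 1 < a) (hr0 : 0 < r) (hr1 : r < 1)
    (hcA : 1 ≤ cA) (hcR : 1 ≤ cR)
    (hx : 0 < x) (hy : 0 < y) (hG : G a r cA cR x y = 0) :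
    Gy a r cA cR x y < 0 := by
  have hs : 0 < cA * x := mul_pos (by linarith) hx
  have ht : 0 < cR * y := mul_pos (by linarith) hy
  simp only [G] at hG
  have hUu : (0:ℝ) ≤ (cR - 1) * ((1 + a*(cA*x))^3 - (1 + (cA*x))^3) := by
    apply mul_nonneg (by linarith)
    have : (1:ℝ) + (cA*x) ≤ 1 + a*(cA*x) := by nlinarith
    nlinarith [pow_le_pow_left₀ (show (0:ℝ) ≤ 1 + cA*x by linarith) this 3]
  have h1 : (1 + a*(cA*x) + r*(cR*y))^3 + (cA-1)*(1+r*(cR*y))^3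
      ≤ (1 + cA*x + cR*y)^3 + (cA-1)*(1+cR*y)^3 := by nlinarith [hG, hUu]
  have key := keyY_abs r (cA-1) (cR*y) (1 + a*(cA*x) + r*(cR*y)) (1 + cA*x + cR*y)
    hr0 hr1 (by linarith) ht (by linarith) (by nlinarith) (by linarith [h1])
  have hGy : Gy a r cA cR x y
      = 3*cR*((r*(1 + a*(cA*x) + r*(cR*y))^2 + (cA-1)*r*(1+r*(cR*y))^2)
        - ((1 + cA*x + cR*y)^2 + (cA-1)*(1+cR*y)^2)) := by
    simp only [Gy]; ring
  rw [hGy]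
  apply mul_neg_of_pos_of_neg (by linarith)
  linarith [key]

lemma Gx_pos {a r cA cR x y : ℝ} (ha : 1 < a) (hr0 : 0 < r) (hr1 : r < 1)
    (hcA : 1 ≤ cA) (hcR : 1 ≤ cR)
    (hx : 0 < x) (hy : 0 < y) (hG : G a r cA cR x y = 0) :
    0 < Gx a r cA cR x y := by
  have hs : 0 < cA * x := mul_pos (by linarith) hx
  have ht : 0 < cR * y := mul_pos (by linarith) hy
  simp only [G] at hG
  have hVv : (0:ℝ) ≤ (cA - 1) * ((1 + (cR*y))^3 - (1 + r*(cR*y))^3) := by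
    apply mul_nonneg (by linarith)
    have : (1:ℝ) + r*(cR*y) ≤ 1 + cR*y := by nlinarith
    nlinarith [pow_le_pow_left₀ (show (0:ℝ) ≤ 1 + r*(cR*y) by nlinarith [mul_pos hr0 ht]) this 3]
  have h1 : (1 + cA*x + cR*y)^3 + (cR-1)*(1+cA*x)^3
      ≤ (1 + a*(cA*x) + r*(cR*y))^3 + (cR-1)*(1+a*(cA*x))^3 := by nlinarith [hG, hVv]
  have key := keyX_abs a (cR-1) (cA*x) (1 + a*(cA*x) + r*(cR*y)) (1 + cA*x + cR*y)
    ha (by linarith) hs (by nlinarith) (by nlinarith) (by linarith [h1])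
  have hGx : Gx a r cA cR x y
      = 3*cA*((a*(1 + a*(cA*x) + r*(cR*y))^2 + (cR-1)*a*(1+a*(cA*x))^2)
        - ((1 + cA*x + cR*y)^2 + (cR-1)*(1+cA*x)^2)) := by
    simp only [Gx]; ring
  rw [hGx]
  apply mul_pos (by linarith)
  linarith [key]


/-- If `h` is continuous on `[a,b]`, nonnegative at `a`, and at every zero in `[a,b]`
it is eventually negative on the left and eventually positive on the right,
then `h b > 0`. -/
lemma signProp {h : ℝ → ℝ} {a b : ℝ} (hab : a < b)
    (hc : ContinuousOn h (Set.Icc a b)) (ha0 : 0 ≤ h a)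
    (hz : ∀ z ∈ Set.Icc a b, h z = 0 →
      (∀ᶠ x in nhdsWithin z (Set.Iio z), h x < 0) ∧
      (∀ᶠ x in nhdsWithin z (Set.Ioi z), 0 < h x)) :
    0 < h b := by
  by_contra hb
  push_neg at hb
  -- find a point a' in [a,b) with h a' > 0
  obtain ⟨a', ha'ab, ha'pos⟩ : ∃ a', a' ∈ Set.Ico a b ∧ 0 < h a' := by
    rcases eq_or_lt_of_le ha0 with heq | hlt
    · have hev := (hz a ⟨le_refl _, hab.le⟩ heq.symm).2
      have hmem : Set.Ioo a b ∈ nhdsWithin a (Set.Ioi a) :=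
        Ioo_mem_nhdsGT_of_mem ⟨le_refl a, hab⟩
      obtain ⟨x, hx1, hx2⟩ := (hev.and (Filter.eventually_of_mem hmem (fun x hx => hx))).exists
      exact ⟨x, ⟨hx2.1.le, hx2.2⟩, hx1⟩
    · exact ⟨a, ⟨le_refl a, hab⟩, hlt⟩
  have ha'b : a' < b := ha'ab.2
  set S := Set.Icc a' b ∩ h ⁻¹' Set.Iic 0 with hS
  have hSne : S.Nonempty := ⟨b, ⟨ha'b.le, le_refl b⟩, hb⟩
  have hSbdd : BddBelow S := ⟨a', fun x hx => hx.1.1⟩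
  have hsub : Set.Icc a' b ⊆ Set.Icc a b := Set.Icc_subset_Icc ha'ab.1 (le_refl b)
  have hSclosed : IsClosed S :=
    (hc.mono hsub).preimage_isClosed_of_isClosed isClosed_Icc isClosed_Iic
  set c := sInf S with hcdef
  have hcS : c ∈ S := hSclosed.csInf_mem hSne hSbdd
  have hca' : a' < c := by
    rcases eq_or_lt_of_le hcS.1.1 with heq | hlt
    · exfalso
      have : h c ≤ 0 := hcS.2
      rw [heq] at ha'pos
      linarith
    · exact hlt
  have hcb : c ≤ b := hcS.1.2
  have hpos : ∀ x ∈ Set.Ico a' c, 0 < h x := by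
    intro x hx
    by_contra hxn
    push_neg at hxn
    have hxS : x ∈ S := ⟨⟨hx.1, le_trans hx.2.le hcb⟩, hxn⟩
    exact absurd (csInf_le hSbdd hxS) (not_le.mpr hx.2)
  have hc0 : h c = 0 := by
    refine le_antisymm hcS.2 ?_
    have hcont : ContinuousWithinAt h (Set.Icc a b) c :=
      hc.continuousWithinAt ⟨le_trans ha'ab.1 hcS.1.1, hcb⟩
    have hsub2 : Set.Ioo a' c ⊆ Set.Icc a b := fun x hx =>
      ⟨le_trans ha'ab.1 hx.1.le, le_trans hx.2.le hcb⟩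
    have htd : Filter.Tendsto h (nhdsWithin c (Set.Ioo a' c)) (nhds (h c)) :=
      hcont.mono_left (nhdsWithin_mono _ hsub2)
    have hne : (nhdsWithin c (Set.Ioo a' c)).NeBot := by
      rw [← mem_closure_iff_nhdsWithin_neBot, closure_Ioo (ne_of_lt hca')]
      exact ⟨hca'.le, le_refl c⟩
    refine ge_of_tendsto htd ?_
    filter_upwards [self_mem_nhdsWithin] with x hx
    exact (hpos x ⟨hx.1.le, hx.2⟩).le
  have hev := (hz c ⟨le_trans ha'ab.1 hca'.le, hcb⟩ hc0).1
  have hmem : Set.Ioo a' c ∈ nhdsWithin c (Set.Iio c) :=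
    Ioo_mem_nhdsLT_of_mem ⟨hca', le_refl c⟩
  obtain ⟨x, hx1, hx2⟩ := (hev.and (Filter.eventually_of_mem hmem (fun x hx => hx))).exists
  exact absurd (hpos x ⟨hx2.1.le, hx2.2⟩) (not_lt.mpr hx1.le)

set_option maxHeartbeats 1000000 in
/-- There is a differentiable, strictly increasing, positive function `f` on
`(0,∞)` whose graph is exactly the zero set of `G` in the positive quadrant,
with `G > 0` below the graph and `G < 0` above it. -/
theorem threshold_function_exists (a r cA cR : ℝ)
    (ha : 1 < a) (hr0 : 0 < r) (hr1 : r < 1) (hcA : 1 ≤ cA) (hcR : 1 ≤ cR) :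
    ∃ f : ℝ → ℝ,
      (∀ x, 0 < x → 0 < f x) ∧
      DifferentiableOn ℝ f (Set.Ioi 0) ∧
      StrictMonoOn f (Set.Ioi 0) ∧
      ∀ x, 0 < x → ∀ y, 0 < y →
        (G a r cA cR x y = 0 ↔ y = f x) ∧
        (0 < G a r cA cR x y ↔ y < f x) ∧
        (G a r cA cR x y < 0 ↔ f x < y) := by
  have hcA0 : (0:ℝ) < cA := by linarith
  have hcR0 : (0:ℝ) < cR := by linarith
  -- continuity of lines
  have contLine : ∀ p q c m : ℝ, Continuous (fun ξ => G a r cA cR (p+q*ξ) (c+m*ξ)) :=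
    fun p q c m => continuous_iff_continuousAt.mpr
      (fun ξ => (hasDerivAt_line a r cA cR p q c m ξ).continuousAt)
  have contY : ∀ x : ℝ, Continuous (fun y => G a r cA cR x y) := by
    intro x
    have h := contLine x 0 0 1
    have : (fun ξ : ℝ => G a r cA cR (x + 0*ξ) (0 + 1*ξ)) = fun y => G a r cA cR x y := by
      funext ξ; norm_num
    rwa [this] at h
  -- positivity at y = 0
  have G_pos0 : ∀ x : ℝ, 0 < x → 0 < G a r cA cR x 0 := by
    intro x hx
    have hlt : 1 + cA*x < 1 + cA*a*x := by nlinarith [mul_pos hcA0 hx]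
    have hd := pow_lt_pow_left₀ hlt (by positivity) (three_ne_zero)
    have hD : 0 < cR * ((1 + cA*a*x)^3 - (1 + cA*x)^3) := mul_pos hcR0 (by linarith)
    simp only [G, mul_zero, add_zero]
    nlinarith [hD]
  -- negativity for large y
  have G_negY : ∀ x : ℝ, 0 < x → ∃ Y, 0 < Y ∧ G a r cA cR x Y < 0 := by
    intro x hx
    set C := (cR - 1) * ((1 + cA * a * x) ^ 3 - (1 + cA * x) ^ 3) with hCdef
    have hC0 : 0 ≤ C := by
      apply mul_nonneg (by linarith)
      have hle : 1 + cA*x ≤ 1 + cA*a*x := by nlinarith [mul_pos hcA0 hx]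
      have := pow_le_pow_left₀ (show (0:ℝ) ≤ 1 + cA*x by positivity) hle 3
      linarith
    have hden : 0 < cR*(1-r) := mul_pos hcR0 (by linarith)
    set Y := (cA*(a-1)*x + C + 1)/(cR*(1-r)) with hYdef
    have hD0 : 0 < cA*(a-1)*x := by
      apply mul_pos (mul_pos hcA0 (by linarith)) hx
    have hY0 : 0 < Y := div_pos (by linarith) hden
    refine ⟨Y, hY0, ?_⟩
    have hYal : cR*(1-r)*Y = cA*(a-1)*x + C + 1 := by
      rw [hYdef]; field_simp [show (1:ℝ) - r ≠ 0 by linarith]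
    have hQv : 1 + cA*x + cR*Y = (1 + cA*a*x + cR*r*Y) + (C+1) := by
      linear_combination hYal
    have hPv1 : (1:ℝ) ≤ 1 + cA*a*x + cR*r*Y := by
      nlinarith [mul_pos (mul_pos hcR0 hr0) hY0, mul_pos (mul_pos hcA0 (show (0:ℝ) < a by linarith)) hx]
    have hnp : (cA-1)*((1+cR*r*Y)^3 - (1+cR*Y)^3) ≤ 0 := by
      apply mul_nonpos_of_nonneg_of_nonpos (by linarith)
      have hle : 1 + cR*r*Y ≤ 1 + cR*Y := by nlinarith [mul_pos hcR0 hY0]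
      have := pow_le_pow_left₀ (show (0:ℝ) ≤ 1 + cR*r*Y by nlinarith [mul_pos (mul_pos hcR0 hr0) hY0]) hle 3
      linarith
    simp only [G]
    rw [hQv]
    nlinarith [hnp, hC0, hPv1,
      mul_nonneg (show (0:ℝ) ≤ (1 + cA*a*x + cR*r*Y)^2 - 1 by nlinarith)
        (show (0:ℝ) ≤ C + 1 by linarith),
      mul_nonneg (mul_nonneg (show (0:ℝ) ≤ 1 + cA*a*x + cR*r*Y by linarith)
        (show (0:ℝ) ≤ C+1 by linarith)) (show (0:ℝ) ≤ C+1 by linarith),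
      pow_nonneg (show (0:ℝ) ≤ C+1 by linarith) 3]
  -- existence of a zero
  have exZero : ∀ x : ℝ, 0 < x → ∃ y, 0 < y ∧ G a r cA cR x y = 0 := by
    intro x hx
    obtain ⟨Y, hY0, hYneg⟩ := G_negY x hx
    have hmem : (0:ℝ) ∈ Set.Ioo (G a r cA cR x Y) (G a r cA cR x 0) := ⟨hYneg, G_pos0 x hx⟩
    obtain ⟨y, hy, hyz⟩ := intermediate_value_Ioo' hY0.le ((contY x).continuousOn) hmem
    exact ⟨y, hy.1, hyz⟩
  classical
  set f : ℝ → ℝ := fun x => if hx : 0 < x then (exZero x hx).choose else 1 with hfdef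
  have hfpos : ∀ x, 0 < x → 0 < f x := by
    intro x hx
    rw [hfdef]; simp only [dif_pos hx]
    exact (exZero x hx).choose_spec.1
  have hfzero : ∀ x, 0 < x → G a r cA cR x (f x) = 0 := by
    intro x hx
    rw [hfdef]; simp only [dif_pos hx]
    exact (exZero x hx).choose_spec.2
  -- sign above the graph
  have signAbove : ∀ x, 0 < x → ∀ y, f x < y → G a r cA cR x y < 0 := by
    intro x hx y hy
    have hfx := hfpos x hx
    have hkey := signProp (h := fun η => -G a r cA cR x η) hy
      ((contY x).neg.continuousOn)
      (by rw [hfzero x hx]; norm_num)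
      ?_
    · simpa using hkey
    · intro z hz hz0
      have hz0' : G a r cA cR x z = 0 := by linarith
      have hzpos : 0 < z := lt_of_lt_of_le hfx hz.1
      have hGy := Gy_neg ha hr0 hr1 hcA hcR hx hzpos hz0'
      have hder : HasDerivAt (fun η => -G a r cA cR x η) (-Gy a r cA cR x z) z :=
        (hasDerivAt_y a r cA cR x z).neg
      have hd : 0 < -Gy a r cA cR x z := by linarith
      exact ⟨eventually_neg_left hder hd hz0, eventually_pos_right hder hd hz0⟩
  -- sign below the graph
  have signBelow : ∀ x, 0 < x → ∀ y, 0 < y → y < f x → 0 < G a r cA cR x y := by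
    intro x hx y hy0 hy
    have hkey := signProp (h := fun ξ => G a r cA cR (x + 0*ξ) ((y + f x) + (-1)*ξ)) hy
      ((contLine x 0 (y + f x) (-1)).continuousOn)
      (by
        have h1 : x + 0*y = x := by ring
        have h2 : (y + f x) + (-1)*y = f x := by ring
        simp only [h1, h2, hfzero x hx]
        exact le_refl 0)
      ?_
    · have h1 : x + 0*(f x) = x := by ring
      have h2 : (y + f x) + (-1)*(f x) = y := by ring
      simp only [h1, h2] at hkey
      exact hkey
    · intro z hz hz0
      have h1 : x + 0*z = x := by ring
      have harg : 0 < (y + f x) + (-1)*z := by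
        have := hz.2
        linarith
      have hz0' : G a r cA cR x ((y + f x) + (-1)*z) = 0 := by rw [h1] at hz0; exact hz0
      have hGy := Gy_neg ha hr0 hr1 hcA hcR hx harg hz0'
      have hder := hasDerivAt_line a r cA cR x 0 (y + f x) (-1) z
      have hd : 0 < 0 * Gx a r cA cR (x + 0*z) ((y + f x) + (-1)*z)
          + (-1) * Gy a r cA cR (x + 0*z) ((y + f x) + (-1)*z) := by
        rw [h1]; linarith
      exact ⟨eventually_neg_left hder hd hz0, eventually_pos_right hder hd hz0⟩
  -- G positive to the right along horizontal line through a graph point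
  have signX : ∀ x1, 0 < x1 → ∀ x2, x1 < x2 → 0 < G a r cA cR x2 (f x1) := by
    intro x1 hx1 x2 h12
    have hfx1 := hfpos x1 hx1
    have hkey := signProp (h := fun ξ => G a r cA cR (0 + 1*ξ) (f x1 + 0*ξ)) h12
      ((contLine 0 1 (f x1) 0).continuousOn)
      (by
        have h1 : (0:ℝ) + 1*x1 = x1 := by ring
        have h2 : f x1 + 0*x1 = f x1 := by ring
        simp only [h1, h2, hfzero x1 hx1]
        exact le_refl 0)
      ?_
    · have h1 : (0:ℝ) + 1*x2 = x2 := by ring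
      have h2 : f x1 + 0*x2 = f x1 := by ring
      simp only [h1, h2] at hkey
      exact hkey
    · intro z hz hz0
      have h1 : (0:ℝ) + 1*z = z := by ring
      have h2 : f x1 + 0*z = f x1 := by ring
      have hzpos : 0 < z := lt_of_lt_of_le hx1 hz.1
      have hz0' : G a r cA cR z (f x1) = 0 := by rw [h1, h2] at hz0; exact hz0
      have hGx := Gx_pos ha hr0 hr1 hcA hcR hzpos hfx1 hz0'
      have hder := hasDerivAt_line a r cA cR 0 1 (f x1) 0 z
      have hd : 0 < 1 * Gx a r cA cR (0 + 1*z) (f x1 + 0*z)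
          + 0 * Gy a r cA cR (0 + 1*z) (f x1 + 0*z) := by
        rw [h1, h2]; linarith
      exact ⟨eventually_neg_left hder hd hz0, eventually_pos_right hder hd hz0⟩
  -- the iff characterisations
  have charac : ∀ x, 0 < x → ∀ y, 0 < y →
      (G a r cA cR x y = 0 ↔ y = f x) ∧
      (0 < G a r cA cR x y ↔ y < f x) ∧
      (G a r cA cR x y < 0 ↔ f x < y) := by
    intro x hx y hy
    refine ⟨⟨?_, ?_⟩, ⟨?_, ?_⟩, ⟨?_, ?_⟩⟩
    · intro h
      rcases lt_trichotomy y (f x) with h' | h' | h'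
      · exact absurd h (ne_of_gt (signBelow x hx y hy h'))
      · exact h'
      · exact absurd h (ne_of_lt (signAbove x hx y h'))
    · intro h; rw [h]; exact hfzero x hx
    · intro h
      rcases lt_trichotomy y (f x) with h' | h' | h'
      · exact h'
      · exfalso; rw [h', hfzero x hx] at h; exact lt_irrefl 0 h
      · exact absurd h (not_lt.mpr (signAbove x hx y h').le)
    · exact fun h => signBelow x hx y hy h
    · intro h
      rcases lt_trichotomy y (f x) with h' | h' | h'
      · exact absurd h (not_lt.mpr (signBelow x hx y hy h').le)
      · exfalso; rw [h', hfzero x hx] at h; exact lt_irrefl 0 h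
      · exact h'
    · exact fun h => signAbove x hx y h
  -- strict monotonicity
  have hmono : StrictMonoOn f (Set.Ioi 0) := by
    intro x1 hx1 x2 hx2 h12
    have hx1' : 0 < x1 := hx1
    have hx2' : 0 < x2 := hx2
    have hpos2 := signX x1 hx1' x2 h12
    rcases lt_trichotomy (f x1) (f x2) with h | h | h
    · exact h
    · exfalso; rw [h, hfzero x2 hx2'] at hpos2; exact lt_irrefl 0 hpos2
    · exact absurd hpos2 (not_lt.mpr (signAbove x2 hx2' (f x1) h).le)
  -- differentiability
  have hderivf : ∀ x0, 0 < x0 →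
      HasDerivAt f (-(Gx a r cA cR x0 (f x0)) / Gy a r cA cR x0 (f x0)) x0 := by
    intro x0 hx0
    have hfx0 := hfpos x0 hx0
    have hz0 := hfzero x0 hx0
    have hYd := Gy_neg ha hr0 hr1 hcA hcR hx0 hfx0 hz0
    have hXd := Gx_pos ha hr0 hr1 hcA hcR hx0 hfx0 hz0
    have hYdne : Gy a r cA cR x0 (f x0) ≠ 0 := ne_of_lt hYd
    have hdYd : (-(Gx a r cA cR x0 (f x0)) / Gy a r cA cR x0 (f x0)) * Gy a r cA cR x0 (f x0)
        = -(Gx a r cA cR x0 (f x0)) := div_mul_cancel₀ _ hYdne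
    rw [hasDerivAt_iff_tendsto_slope]
    have harg1 : ∀ ξ : ℝ, (0:ℝ) + 1*ξ = ξ := fun ξ => by ring
    have harg2 : ∀ m : ℝ, (f x0 - m*x0) + m*x0 = f x0 := fun m => by ring
    have hline : ∀ m : ℝ, HasDerivAt (fun ξ => G a r cA cR (0 + 1*ξ) ((f x0 - m*x0) + m*ξ))
        (Gx a r cA cR x0 (f x0) + m * Gy a r cA cR x0 (f x0)) x0 := by
      intro m
      have h := hasDerivAt_line a r cA cR 0 1 (f x0 - m*x0) m x0
      rw [harg1 x0, harg2 m] at h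
      simpa using h
    have hψ0 : ∀ m : ℝ, G a r cA cR (0 + 1*x0) ((f x0 - m*x0) + m*x0) = 0 := by
      intro m; rw [harg1 x0, harg2 m]; exact hz0
    have hopen1 : ∀ᶠ ξ in nhds x0, 0 < ξ := eventually_gt_nhds hx0
    have hopen2 : ∀ m : ℝ, ∀ᶠ ξ in nhds x0, 0 < (f x0 - m*x0) + m*ξ := by
      intro m
      have hcont : Continuous fun ξ : ℝ => (f x0 - m*x0) + m*ξ := by continuity
      have h0' : 0 < (f x0 - m*x0) + m*x0 := by rw [harg2 m]; exact hfx0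
      exact (hcont.continuousAt (x := x0)).eventually (eventually_gt_nhds h0')
    -- from sign of G on the line, bound f
    have boundAbove : ∀ m : ℝ, ∀ ξ : ℝ, 0 < ξ → 0 < (f x0 - m*x0) + m*ξ →
        G a r cA cR ξ ((f x0 - m*m*0 + 0) + 0) = 0 → True := fun _ _ _ _ _ => trivial
    rw [tendsto_order]
    constructor
    · -- c < d : eventually c < slope
      intro c hc
      have hmYd : (-(Gx a r cA cR x0 (f x0)) / Gy a r cA cR x0 (f x0)) * Gy a r cA cR x0 (f x0)
          < c * Gy a r cA cR x0 (f x0) := mul_lt_mul_of_neg_right hc hYd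
      have hd1 : 0 < Gx a r cA cR x0 (f x0) + c * Gy a r cA cR x0 (f x0) := by
        rw [hdYd] at hmYd; linarith
      have hevR := eventually_pos_right (hline c) hd1 (hψ0 c)
      have hevL := eventually_neg_left (hline c) hd1 (hψ0 c)
      rw [← nhdsLT_sup_nhdsGT, Filter.eventually_sup]
      constructor
      · -- left: ψ < 0 ⇒ f ξ < line ⇒ slope > c
        filter_upwards [hevL, (hopen1.filter_mono nhdsWithin_le_nhds),
          ((hopen2 c).filter_mono nhdsWithin_le_nhds), self_mem_nhdsWithin] with ξ h1 h2 h3 h4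
        simp only [harg1 ξ] at h1
        have hlt : f ξ < (f x0 - c*x0) + c*ξ := by
          by_contra hcon
          push_neg at hcon
          rcases eq_or_lt_of_le hcon with heq | hltt
          · rw [heq, hfzero ξ h2] at h1; exact lt_irrefl 0 h1
          · exact absurd h1 (not_lt.mpr (signBelow ξ h2 _ h3 hltt).le)
        have hξx : ξ - x0 < 0 := sub_neg.mpr h4
        rw [slope_def_field, lt_div_iff_of_neg hξx]
        nlinarith [hlt]
      · -- right: ψ > 0 ⇒ line < f ξ ⇒ slope > c
        filter_upwards [hevR, (hopen1.filter_mono nhdsWithin_le_nhds),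
          ((hopen2 c).filter_mono nhdsWithin_le_nhds), self_mem_nhdsWithin] with ξ h1 h2 h3 h4
        simp only [harg1 ξ] at h1
        have hlt : (f x0 - c*x0) + c*ξ < f ξ := by
          by_contra hcon
          push_neg at hcon
          rcases eq_or_lt_of_le hcon with heq | hltt
          · rw [← heq, hfzero ξ h2] at h1
            exact lt_irrefl 0 h1
          · exact absurd h1 (not_lt.mpr (signAbove ξ h2 _ hltt).le)
        have hξx : 0 < ξ - x0 := sub_pos.mpr h4
        rw [slope_def_field, lt_div_iff₀ hξx]
        nlinarith [hlt]
    · -- d < c : eventually slope < c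
      intro c hc
      have hmYd : c * Gy a r cA cR x0 (f x0)
          < (-(Gx a r cA cR x0 (f x0)) / Gy a r cA cR x0 (f x0)) * Gy a r cA cR x0 (f x0) :=
        mul_lt_mul_of_neg_right hc hYd
      have hd1 : Gx a r cA cR x0 (f x0) + c * Gy a r cA cR x0 (f x0) < 0 := by
        rw [hdYd] at hmYd; linarith
      have hder' : HasDerivAt (fun ξ => -(G a r cA cR (0 + 1*ξ) ((f x0 - c*x0) + c*ξ)))
          (-(Gx a r cA cR x0 (f x0) + c * Gy a r cA cR x0 (f x0))) x0 := (hline c).neg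
      have hd1' : 0 < -(Gx a r cA cR x0 (f x0) + c * Gy a r cA cR x0 (f x0)) := by linarith
      have hz0' : -(G a r cA cR (0 + 1*x0) ((f x0 - c*x0) + c*x0)) = 0 := by
        rw [hψ0 c]; ring
      have hevR := eventually_pos_right hder' hd1' hz0'
      have hevL := eventually_neg_left hder' hd1' hz0'
      rw [← nhdsLT_sup_nhdsGT, Filter.eventually_sup]
      constructor
      · -- left: -ψ < 0 ⇒ ψ > 0 ⇒ line < f ξ ⇒ slope < c
        filter_upwards [hevL, (hopen1.filter_mono nhdsWithin_le_nhds),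
          ((hopen2 c).filter_mono nhdsWithin_le_nhds), self_mem_nhdsWithin] with ξ h1 h2 h3 h4
        simp only [harg1 ξ] at h1
        have h1' : 0 < G a r cA cR ξ ((f x0 - c*x0) + c*ξ) := by linarith
        have hlt : (f x0 - c*x0) + c*ξ < f ξ := by
          by_contra hcon
          push_neg at hcon
          rcases eq_or_lt_of_le hcon with heq | hltt
          · rw [← heq, hfzero ξ h2] at h1'
            exact lt_irrefl 0 h1'
          · exact absurd h1' (not_lt.mpr (signAbove ξ h2 _ hltt).le)
        have hξx : ξ - x0 < 0 := sub_neg.mpr h4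
        rw [slope_def_field, div_lt_iff_of_neg hξx]
        nlinarith [hlt]
      · -- right: -ψ > 0 ⇒ ψ < 0 ⇒ f ξ < line ⇒ slope < c
        filter_upwards [hevR, (hopen1.filter_mono nhdsWithin_le_nhds),
          ((hopen2 c).filter_mono nhdsWithin_le_nhds), self_mem_nhdsWithin] with ξ h1 h2 h3 h4
        simp only [harg1 ξ] at h1
        have h1' : G a r cA cR ξ ((f x0 - c*x0) + c*ξ) < 0 := by linarith
        have hlt : f ξ < (f x0 - c*x0) + c*ξ := by
          by_contra hcon
          push_neg at hcon
          rcases eq_or_lt_of_le hcon with heq | hltt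
          · rw [heq, hfzero ξ h2] at h1'; exact lt_irrefl 0 h1'
          · exact absurd h1' (not_lt.mpr (signBelow ξ h2 _ h3 hltt).le)
        have hξx : 0 < ξ - x0 := sub_pos.mpr h4
        rw [slope_def_field, div_lt_iff₀ hξx]
        nlinarith [hlt]
  exact ⟨f, hfpos,
    fun x hx => (hderivf x hx).differentiableAt.differentiableWithinAt,
    hmono, charac⟩
end

section
/- Let a > 1, 0 < r < 1 and c_A, c_R ≥ 1 be real numbers, and let f : (0,∞) → (0,∞) be strictly increasing with G(x, f(x)) = 0 for all x > 0. Then f(x)/x converges as x → ∞ to a finite limit α ≥ 0 which satisfies (c_A a + c_R r α)^3 − (c_A + c_R α)^3 + (c_R − 1)·[(c_A a)^3 − c_A^3] + (c_A − 1)·[(c_R r α)^3 − (c_R α)^3] = 0; in particular the threshold curve y = f(x) is asymptotically linear. -/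
noncomputable def Pth (a r cA cR t : ℝ) : ℝ :=
  (cA*a + r*t)^3 - (cA+t)^3 + (cR-1)*(cA^3*(a^3-1)) - ((cA-1)*(1-r^3))*t^3

lemma key_alg (r D u v w : ℝ) (hr0 : 0 < r) (hr1 : r < 1) (hD : 0 ≤ D)
    (hu : 0 ≤ u) (hw : 0 < w) (hwv : w < v) (h : u^3 ≤ v^3 + D*w^3) :
    r*u^2 < v^2 + D*w^2 := by
  have hv : 0 < v := hw.trans hwv
  have t1 : 0 ≤ (u - v)^2 * (2*u + v) := by positivity
  have t2 : 3*v*u^2 ≤ 3*v^3 + 2*(D*w^3) := by nlinarith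
  have t2r : r*(3*v*u^2) ≤ r*(3*v^3 + 2*(D*w^3)) :=
    mul_le_mul_of_nonneg_left t2 hr0.le
  have t3 : D*w^3 ≤ D*w^2*v := by nlinarith [mul_nonneg hD (sq_nonneg w)]
  have h5 : r*(D*w^3) ≤ D*w^3 := by nlinarith [mul_nonneg hD (pow_nonneg hw.le 3)]
  have h6 : r*v^3 < v^3 := by nlinarith [pow_pos hv 3]
  have t4 : 3*v*(r*u^2) < 3*v*(v^2 + D*w^2) := by nlinarith
  exact lt_of_mul_lt_mul_left t4 (by positivity)

lemma Pth_cont (a r cA cR : ℝ) : Continuous (Pth a r cA cR) := by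
  unfold Pth; fun_prop

lemma Pth_deriv (a r cA cR t : ℝ) :
    HasDerivAt (Pth a r cA cR)
      (3*(r*(cA*a+r*t)^2) - 3*(cA+t)^2 - 3*(((cA-1)*(1-r^3))*t^2)) t := by
  have h1 : HasDerivAt (fun t : ℝ => (cA*a + r*t)^3) (3*(cA*a+r*t)^2*r) t := by
    have := (((hasDerivAt_id t).const_mul r).const_add (cA*a)).pow 3
    simpa [Pi.pow_def] using this
  have h2 : HasDerivAt (fun t : ℝ => (cA+t)^3) (3*(cA+t)^2*1) t := by
    have := ((hasDerivAt_id t).const_add cA).pow 3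
    simpa [Pi.pow_def] using this
  have h3 : HasDerivAt (fun t : ℝ => ((cA-1)*(1-r^3))*t^3) (((cA-1)*(1-r^3))*(3*t^2)) t := by
    have := ((hasDerivAt_pow 3 t)).const_mul ((cA-1)*(1-r^3))
    simpa using this
  have := ((h1.sub h2).add_const ((cR-1)*(cA^3*(a^3-1)))).sub h3
  exact this.congr_deriv (by ring)

lemma Pth_deriv_neg (a r cA cR t : ℝ) (ha : 1 < a) (hr0 : 0 < r) (hr1 : r < 1)
    (hcA : 1 ≤ cA) (hcR : 1 ≤ cR) (ht : 0 < t) (hP : Pth a r cA cR t ≤ 0) :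
    3*(r*(cA*a+r*t)^2) - 3*(cA+t)^2 - 3*(((cA-1)*(1-r^3))*t^2) < 0 := by
  set D := (cA-1)*(1-r^3) with hDdef
  have hD : 0 ≤ D := by
    apply mul_nonneg (by linarith)
    nlinarith [pow_lt_one₀ hr0.le hr1 (by norm_num : (3:ℕ) ≠ 0)]
  have hK : 0 ≤ (cR-1)*(cA^3*(a^3-1)) := by
    apply mul_nonneg (by linarith)
    apply mul_nonneg (by positivity)
    nlinarith [one_lt_pow₀ (n := 3) ha (by norm_num)]
  have hu : (0:ℝ) ≤ cA*a + r*t := by nlinarith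
  have hwv : t < cA + t := by linarith
  have h : (cA*a + r*t)^3 ≤ (cA+t)^3 + D*t^3 := by
    have := hP; unfold Pth at this; rw [← hDdef] at this; linarith
  have := key_alg r D (cA*a+r*t) (cA+t) t hr0 hr1 hD hu ht hwv h
  linarith

lemma slope_left {P : ℝ → ℝ} {d c b : ℝ} (hP : HasDerivAt P d c) (hd : d < 0)
    (hbc : b < c) : ∃ s, b < s ∧ s < c ∧ P c < P s := by
  have h1 : Filter.Tendsto (slope P c) (nhdsWithin c {c}ᶜ) (nhds d) :=
    hasDerivAt_iff_tendsto_slope.mp hP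
  have h2 : ∀ᶠ s in nhdsWithin c {c}ᶜ, slope P c s < 0 :=
    h1.eventually_lt_const hd
  have h3 : ∀ᶠ s in nhdsWithin c (Set.Iio c), slope P c s < 0 :=
    h2.filter_mono (nhdsWithin_mono c (fun s hs => Set.mem_compl_singleton_iff.mpr (ne_of_lt hs)))
  have h4 : Set.Ioo b c ∈ nhdsWithin c (Set.Iio c) :=
    Ioo_mem_nhdsLT_of_mem ⟨hbc, le_refl c⟩
  obtain ⟨s, hs1, hs2⟩ := (h3.and (Filter.eventually_of_mem h4 (fun x hx => hx))).exists
  refine ⟨s, hs2.1, hs2.2, ?_⟩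
  have hslope : (P s - P c)/(s - c) < 0 := by
    rw [slope_def_field] at hs1; simpa using hs1
  rcases div_neg_iff.mp hslope with ⟨hn, hd'⟩ | ⟨hn, hd'⟩
  · linarith
  · linarith [hs2.2]

lemma slope_right {P : ℝ → ℝ} {d c b : ℝ} (hP : HasDerivAt P d c) (hd : d < 0)
    (hbc : c < b) : ∃ s, c < s ∧ s < b ∧ P s < P c := by
  have h1 : Filter.Tendsto (slope P c) (nhdsWithin c {c}ᶜ) (nhds d) :=
    hasDerivAt_iff_tendsto_slope.mp hP
  have h2 : ∀ᶠ s in nhdsWithin c {c}ᶜ, slope P c s < 0 :=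
    h1.eventually_lt_const hd
  have h3 : ∀ᶠ s in nhdsWithin c (Set.Ioi c), slope P c s < 0 :=
    h2.filter_mono (nhdsWithin_mono c (fun s hs => Set.mem_compl_singleton_iff.mpr (ne_of_gt hs)))
  have h4 : Set.Ioo c b ∈ nhdsWithin c (Set.Ioi c) :=
    Ioo_mem_nhdsGT_of_mem ⟨le_refl c, hbc⟩
  obtain ⟨s, hs1, hs2⟩ := (h3.and (Filter.eventually_of_mem h4 (fun x hx => hx))).exists
  refine ⟨s, hs2.1, hs2.2, ?_⟩
  have hslope : (P s - P c)/(s - c) < 0 := by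
    rw [slope_def_field] at hs1; simpa using hs1
  rcases div_neg_iff.mp hslope with ⟨hn, hd'⟩ | ⟨hn, hd'⟩
  · linarith [hs2.1]
  · linarith

lemma Pth_exists_nonpos (a r cA cR : ℝ) (ha : 1 < a) (hr0 : 0 < r) (hr1 : r < 1)
    (hcA : 1 ≤ cA) (hcR : 1 ≤ cR) :
    ∃ T, 0 ≤ T ∧ Pth a r cA cR T ≤ 0 := by
  set K := (cR-1)*(cA^3*(a^3-1)) with hKdef
  have ha3 : 1 < a^3 := one_lt_pow₀ ha (by norm_num)
  have hK0 : 0 ≤ K := by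
    apply mul_nonneg (by linarith); apply mul_nonneg (by positivity); linarith
  set s0 := max K 1 with hs0def
  have hs01 : 1 ≤ s0 := le_max_right _ _
  have hs0K : K ≤ s0 := le_max_left _ _
  have hs0cube : K ≤ s0^3 := hs0K.trans (le_self_pow₀ hs01 (by norm_num))
  set T := (cA*(a-1) + s0)/(1-r) with hTdef
  have hT0 : 0 ≤ T := by
    apply div_nonneg (by nlinarith) (by linarith)
  have h1r : (1:ℝ)-r ≠ 0 := by linarith
  have hT : (1-r)*T = cA*(a-1) + s0 := by
    rw [hTdef, ← mul_div_assoc, mul_div_cancel_left₀ _ h1r]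
  have hsum : cA + T = (cA*a + r*T) + s0 := by nlinarith [hT]
  have hU : 0 ≤ cA*a + r*T := by nlinarith [mul_nonneg hr0.le hT0]
  have hD : 0 ≤ (cA-1)*(1-r^3) := by
    apply mul_nonneg (by linarith)
    nlinarith [pow_lt_one₀ hr0.le hr1 (by norm_num : (3:ℕ) ≠ 0)]
  refine ⟨T, hT0, ?_⟩
  unfold Pth
  rw [← hKdef, hsum]
  have hDT : 0 ≤ ((cA-1)*(1-r^3))*T^3 := mul_nonneg hD (by positivity)
  nlinarith [sq_nonneg (cA*a + r*T), mul_nonneg (mul_nonneg hU hU) (by linarith : (0:ℝ) ≤ s0),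
    mul_nonneg hU (mul_nonneg (by linarith : (0:ℝ) ≤ s0) (by linarith : (0:ℝ) ≤ s0))]

lemma Pth_root (a r cA cR : ℝ) (ha : 1 < a) (hr0 : 0 < r) (hr1 : r < 1)
    (hcA : 1 ≤ cA) (hcR : 1 ≤ cR) :
    ∃ t0, 0 < t0 ∧ Pth a r cA cR t0 = 0 ∧
      (∀ t, 0 ≤ t → t < t0 → 0 < Pth a r cA cR t) ∧
      (∀ t, t0 < t → Pth a r cA cR t < 0) := by
  set P := Pth a r cA cR with hPdef
  have hcont : Continuous P := Pth_cont a r cA cR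
  have hP0 : 0 < P 0 := by
    show 0 < Pth a r cA cR 0
    unfold Pth
    have ha3 : 1 < a^3 := one_lt_pow₀ ha (by norm_num)
    have : (1:ℝ) ≤ cA^3 := one_le_pow₀ hcA
    nlinarith [mul_pos (by linarith : (0:ℝ) < cR) (mul_pos (by positivity : (0:ℝ) < cA^3) (by linarith : (0:ℝ) < a^3 - 1))]
  obtain ⟨T, hT0, hTle⟩ := Pth_exists_nonpos a r cA cR ha hr0 hr1 hcA hcR
  set S : Set ℝ := {t | 0 ≤ t ∧ P t ≤ 0} with hSdef
  have hSne : S.Nonempty := ⟨T, hT0, hTle⟩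
  have hSbdd : BddBelow S := ⟨0, fun t ht => ht.1⟩
  have hSclosed : IsClosed S := by
    have : S = Set.Ici 0 ∩ P ⁻¹' Set.Iic 0 := by
      ext t; simp [hSdef, Set.mem_Ici, Set.mem_Iic, and_comm]
    rw [this]
    exact isClosed_Ici.inter (isClosed_Iic.preimage hcont)
  set t0 := sInf S with ht0def
  have ht0mem : t0 ∈ S := hSclosed.csInf_mem hSne hSbdd
  have ht0nonneg : 0 ≤ t0 := ht0mem.1
  have ht0le : P t0 ≤ 0 := ht0mem.2
  have ht0pos : 0 < t0 := by
    rcases ht0nonneg.lt_or_eq with h | h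
    · exact h
    · exfalso; rw [← h] at ht0le; linarith
  -- Claim A
  have hA : ∀ t, 0 ≤ t → t < t0 → 0 < P t := by
    intro t htn htlt
    by_contra hc
    push_neg at hc
    have : t0 ≤ t := csInf_le hSbdd ⟨htn, hc⟩
    linarith
  -- Claim B1
  have hB1 : ∀ s, t0 < s → P s ≤ 0 := by
    intro s hs
    by_contra hc
    push_neg at hc
    set U : Set ℝ := {u | u ∈ Set.Icc t0 s ∧ P u ≤ 0} with hUdef
    have hUne : U.Nonempty := ⟨t0, ⟨le_refl _, hs.le⟩, ht0le⟩
    have hUbdd : BddAbove U := ⟨s, fun u hu => hu.1.2⟩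
    have hUclosed : IsClosed U := by
      have : U = Set.Icc t0 s ∩ P ⁻¹' Set.Iic 0 := by ext u; simp [hUdef]
      rw [this]
      exact isClosed_Icc.inter (isClosed_Iic.preimage hcont)
    set c := sSup U with hcdef
    have hcmem : c ∈ U := hUclosed.csSup_mem hUne hUbdd
    have hcs : c < s := by
      rcases hcmem.1.2.lt_or_eq with h | h
      · exact h
      · exfalso; rw [h] at hcmem; linarith [hcmem.2]
    have hcpos : 0 < c := lt_of_lt_of_le ht0pos hcmem.1.1
    have hd := Pth_deriv_neg a r cA cR c ha hr0 hr1 hcA hcR hcpos hcmem.2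
    obtain ⟨s', hs'1, hs'2, hs'3⟩ := slope_right (Pth_deriv a r cA cR c) hd hcs
    have : P s' ≤ 0 := by linarith [hcmem.2]
    have hs'mem : s' ∈ U := ⟨⟨le_trans hcmem.1.1 hs'1.le, hs'2.le⟩, this⟩
    have : s' ≤ c := le_csSup hUbdd hs'mem
    linarith
  -- Claim B2
  have hB2 : ∀ t, t0 < t → P t < 0 := by
    intro t ht
    rcases (hB1 t ht).lt_or_eq with h | h
    · exact h
    · exfalso
      have hd := Pth_deriv_neg a r cA cR t ha hr0 hr1 hcA hcR (ht0pos.trans ht) h.le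
      obtain ⟨s', hs'1, hs'2, hs'3⟩ := slope_left (Pth_deriv a r cA cR t) hd ht
      have hle := hB1 s' hs'1
      have h3 : (0:ℝ) < P s' := by rw [← h]; exact hs'3
      linarith
  -- P t0 = 0
  have ht0eq : P t0 = 0 := by
    refine le_antisymm ht0le ?_
    have htend : Filter.Tendsto P (nhdsWithin t0 (Set.Iio t0)) (nhds (P t0)) :=
      (hcont.continuousAt).continuousWithinAt.tendsto
    have hev : ∀ᶠ s in nhdsWithin t0 (Set.Iio t0), 0 ≤ P s := by
      filter_upwards [Ioo_mem_nhdsLT_of_mem (⟨ht0pos, le_refl t0⟩ : t0 ∈ Set.Ioc 0 t0)]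
        with s hs
      exact (hA s hs.1.le hs.2).le
    exact ge_of_tendsto htend hev
  exact ⟨t0, ht0pos, ht0eq, hA, hB2⟩

noncomputable def Qf (a r cA cR s t : ℝ) : ℝ :=
  (s+cA*a+r*t)^3 - (s+cA+t)^3 + (cR-1)*((s+cA*a)^3-(s+cA)^3)
    + (cA-1)*((s+r*t)^3-(s+t)^3)

lemma G_eq_Qf (a r cA cR x y : ℝ) (hx : x ≠ 0) :
    G a r cA cR x y = x^3 * Qf a r cA cR (1/x) (cR*y/x) := by
  unfold G Qf
  field_simp

lemma cube_pert (A R s : ℝ) (hA0 : 0 ≤ A) (hAR : A ≤ R) (hs0 : 0 ≤ s) (hs1 : s ≤ 1) :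
    0 ≤ (s+A)^3 - A^3 ∧ (s+A)^3 - A^3 ≤ s*(3*R^2+3*R+1) := by
  have hA2 : A^2 ≤ R^2 := by nlinarith
  have hs2 : s^2 ≤ s := by nlinarith
  have hs3 : s^3 ≤ s := by nlinarith [sq_nonneg s]
  constructor
  · nlinarith [mul_nonneg (sq_nonneg A) hs0, mul_nonneg hA0 (sq_nonneg s), pow_nonneg hs0 3]
  · nlinarith [mul_le_mul_of_nonneg_right hA2 hs0,
      mul_le_mul_of_nonneg_left hs2 hA0,
      mul_le_mul_of_nonneg_right hAR hs0, mul_nonneg hA0 hs0]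

lemma pert_bound (a r cA cR Mb s t : ℝ) (ha : 1 < a) (hr0 : 0 < r) (hr1 : r < 1)
    (hcA : 1 ≤ cA) (hcR : 1 ≤ cR) (hs0 : 0 ≤ s) (hs1 : s ≤ 1)
    (ht0 : 0 ≤ t) (htM : t ≤ Mb) :
    Qf a r cA cR s t ≤ Pth a r cA cR t + s*((3*(cA*a+cA+Mb)^2+3*(cA*a+cA+Mb)+1)*(cA+cR-1)) ∧
    Pth a r cA cR t ≤ Qf a r cA cR s t + s*((3*(cA*a+cA+Mb)^2+3*(cA*a+cA+Mb)+1)*(cA+cR-1)) := by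
  set R := cA*a+cA+Mb with hR
  have hMb : 0 ≤ Mb := ht0.trans htM
  have hcAa : 0 ≤ cA*a := by nlinarith
  have hrt : 0 ≤ r*t := mul_nonneg hr0.le ht0
  have hrtt : r*t ≤ t := by nlinarith
  have b1 := cube_pert (cA*a+r*t) R s (by linarith) (by simp [hR]; linarith) hs0 hs1
  have b2 := cube_pert (cA+t) R s (by linarith) (by simp [hR]; linarith) hs0 hs1
  have b3 := cube_pert (cA*a) R s hcAa (by simp [hR]; linarith) hs0 hs1
  have b4 := cube_pert cA R s (by linarith) (by simp [hR]; nlinarith) hs0 hs1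
  have b5 := cube_pert (r*t) R s hrt (by simp [hR]; linarith) hs0 hs1
  have b6 := cube_pert t R s ht0 (by simp [hR]; linarith) hs0 hs1
  have hring : Qf a r cA cR s t - Pth a r cA cR t =
      (((s+(cA*a+r*t))^3-(cA*a+r*t)^3) - ((s+(cA+t))^3-(cA+t)^3))
      + (cR-1)*(((s+cA*a)^3-(cA*a)^3) - ((s+cA)^3-cA^3))
      + (cA-1)*(((s+r*t)^3-(r*t)^3) - ((s+t)^3-t^3)) := by
    unfold Qf Pth; ring
  have hcR1 : (0:ℝ) ≤ cR - 1 := by linarith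
  have hcA1 : (0:ℝ) ≤ cA - 1 := by linarith
  have e1 : (cR-1)*(((s+cA*a)^3-(cA*a)^3) - ((s+cA)^3-cA^3)) ≤ (cR-1)*(s*(3*R^2+3*R+1)) :=
    mul_le_mul_of_nonneg_left (by linarith [b3.2, b4.1]) hcR1
  have e1' : (cR-1)*(-(s*(3*R^2+3*R+1))) ≤ (cR-1)*(((s+cA*a)^3-(cA*a)^3) - ((s+cA)^3-cA^3)) :=
    mul_le_mul_of_nonneg_left (by linarith [b3.1, b4.2]) hcR1
  have e2 : (cA-1)*(((s+r*t)^3-(r*t)^3) - ((s+t)^3-t^3)) ≤ (cA-1)*(s*(3*R^2+3*R+1)) :=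
    mul_le_mul_of_nonneg_left (by linarith [b5.2, b6.1]) hcA1
  have e2' : (cA-1)*(-(s*(3*R^2+3*R+1))) ≤ (cA-1)*(((s+r*t)^3-(r*t)^3) - ((s+t)^3-t^3)) :=
    mul_le_mul_of_nonneg_left (by linarith [b5.1, b6.2]) hcA1
  constructor
  · linarith [b1.2, b2.1, e1, e2, hring]
  · linarith [b1.1, b2.2, e1', e2', hring]

lemma Qf_far_neg (a r cA cR : ℝ) (ha : 1 < a) (hr0 : 0 < r) (hr1 : r < 1)
    (hcA : 1 ≤ cA) (hcR : 1 ≤ cR) :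
    ∃ M0, 0 ≤ M0 ∧ ∀ s t, 0 ≤ s → s ≤ 1 → M0 ≤ t → Qf a r cA cR s t < 0 := by
  set B2 := (cR-1)*(1+cA*a)^3 with hB2
  have hcAa : (1:ℝ) ≤ cA*a := by nlinarith
  have hB2nn : 0 ≤ B2 := mul_nonneg (by linarith) (by positivity)
  set s1 := max B2 1 with hs1
  have hs11 : (1:ℝ) ≤ s1 := le_max_right _ _
  have hs1B : B2 ≤ s1 := le_max_left _ _
  set M0 := (cA*(a-1)+s1+1)/(1-r) with hM0
  have hM0nn : 0 ≤ M0 := div_nonneg (by nlinarith) (by linarith)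
  refine ⟨M0, hM0nn, fun s t hs0 hsle htM => ?_⟩
  have ht0 : 0 ≤ t := hM0nn.trans htM
  have h1r : (1:ℝ) - r ≠ 0 := by linarith
  have hM0eq : (1-r)*M0 = cA*(a-1)+s1+1 := by
    rw [hM0, ← mul_div_assoc, mul_div_cancel_left₀ _ h1r]
  have hd : (1-r)*t ≥ cA*(a-1)+s1+1 := by
    calc (1-r)*t ≥ (1-r)*M0 := by nlinarith
    _ = _ := hM0eq
  set u := s+cA*a+r*t with hu
  set v := s+cA+t with hv
  set d := v - u with hd2
  have hdge : s1 + 1 ≤ d := by simp only [hd2, hv, hu]; nlinarith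
  have hu0 : 0 ≤ u := by simp only [hu]; nlinarith [mul_nonneg hr0.le ht0]
  have hd0 : (0:ℝ) ≤ d := by linarith
  have hcube : u^3 + d^3 ≤ v^3 := by
    have : v = u + d := by ring
    rw [this]
    nlinarith [mul_nonneg (mul_nonneg hu0 hu0) hd0, mul_nonneg (mul_nonneg hu0 hd0) hd0]
  have hd3 : d ≤ d^3 := le_self_pow₀ (by linarith) (by norm_num)
  have hfirst : u^3 - v^3 ≤ -(B2+1) := by
    have : B2 + 1 ≤ d := by linarith
    linarith [hd3]
  have hsecond : (cR-1)*((s+cA*a)^3-(s+cA)^3) ≤ B2 := by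
    have h1 : (s+cA*a)^3 ≤ (1+cA*a)^3 := by
      apply pow_le_pow_left₀ (by linarith) (by linarith)
    have h2 : (0:ℝ) ≤ (s+cA)^3 := by positivity
    calc (cR-1)*((s+cA*a)^3-(s+cA)^3) ≤ (cR-1)*(1+cA*a)^3 := by
          apply mul_le_mul_of_nonneg_left (by linarith) (by linarith)
      _ = B2 := rfl
  have hthird : (cA-1)*((s+r*t)^3-(s+t)^3) ≤ 0 := by
    apply mul_nonpos_of_nonneg_of_nonpos (by linarith)
    have : (s+r*t)^3 ≤ (s+t)^3 := by
      apply pow_le_pow_left₀ (by positivity) (by nlinarith)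
    linarith
  unfold Qf
  have : (s+cA*a+r*t)^3 - (s+cA+t)^3 = u^3 - v^3 := by rw [hu, hv]
  rw [this]
  linarith

set_option maxHeartbeats 1000000 in
/-- The threshold curve `y = f(x)` is asymptotically linear: `f(x)/x` converges
as `x → ∞` to a finite limit `α ≥ 0` satisfying the limiting cubic equation. -/
theorem threshold_asymptotically_linear (a r cA cR : ℝ) (f : ℝ → ℝ)
    (ha : 1 < a) (hr0 : 0 < r) (hr1 : r < 1) (hcA : 1 ≤ cA) (hcR : 1 ≤ cR)
    (hfpos : ∀ x, 0 < x → 0 < f x)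
    (hfmono : StrictMonoOn f (Set.Ioi 0))
    (hfroot : ∀ x, 0 < x → G a r cA cR x (f x) = 0) :
    ∃ α : ℝ, 0 ≤ α ∧
      Filter.Tendsto (fun x => f x / x) Filter.atTop (nhds α) ∧
      (cA * a + cR * r * α) ^ 3 - (cA + cR * α) ^ 3
        + (cR - 1) * ((cA * a) ^ 3 - cA ^ 3)
        + (cA - 1) * ((cR * r * α) ^ 3 - (cR * α) ^ 3) = 0 := by
  have hcR0 : (0:ℝ) < cR := by linarith
  obtain ⟨t0, ht0pos, ht0eq, hA, hB2⟩ := Pth_root a r cA cR ha hr0 hr1 hcA hcR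
  obtain ⟨M0, hM0nn, hfar⟩ := Qf_far_neg a r cA cR ha hr0 hr1 hcA hcR
  refine ⟨t0 / cR, div_nonneg ht0pos.le hcR0.le, ?_, ?_⟩
  · -- the tendsto part
    have hcRα : cR * (t0 / cR) = t0 := by
      rw [← mul_div_assoc, mul_div_cancel_left₀ _ (ne_of_gt hcR0)]
    have htend : Filter.Tendsto (fun x => cR * f x / x) Filter.atTop (nhds t0) := by
      rw [Metric.tendsto_atTop]
      intro ε hε
      obtain ⟨Mb, hMbdef⟩ : ∃ y, y = max M0 (t0 + ε + 1) := ⟨_, rfl⟩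
      have hMbM0 : M0 ≤ Mb := hMbdef ▸ le_max_left _ _
      have hMb0 : 0 ≤ Mb := hM0nn.trans hMbM0
      have ht0ε : t0 + ε ≤ Mb := by
        have := le_max_right M0 (t0 + ε + 1); rw [hMbdef]; linarith
      obtain ⟨z1, hz1mem, hz1max⟩ := isCompact_Icc.exists_isMaxOn
        (Set.nonempty_Icc.mpr ht0ε) ((Pth_cont a r cA cR).continuousOn)
      obtain ⟨m1, hm1def⟩ : ∃ y, y = -(Pth a r cA cR z1) := ⟨_, rfl⟩
      have hm1pos : 0 < m1 := by
        have := hB2 z1 (by linarith [hz1mem.1])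
        rw [hm1def]; linarith
      obtain ⟨t2, ht2def⟩ : ∃ y, y = max (t0 - ε) 0 := ⟨_, rfl⟩
      have ht2lt : t2 < t0 := ht2def ▸ max_lt (by linarith) ht0pos
      have ht20 : 0 ≤ t2 := ht2def ▸ le_max_right _ _
      obtain ⟨z2, hz2mem, hz2min⟩ := isCompact_Icc.exists_isMinOn
        (Set.nonempty_Icc.mpr ht20) ((Pth_cont a r cA cR).continuousOn)
      obtain ⟨m2, hm2def⟩ : ∃ y, y = Pth a r cA cR z2 := ⟨_, rfl⟩
      have hm2pos : 0 < m2 :=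
        hm2def ▸ hA z2 hz2mem.1 (lt_of_le_of_lt hz2mem.2 ht2lt)
      obtain ⟨C, hCdef⟩ : ∃ y,
          y = (3*(cA*a+cA+Mb)^2+3*(cA*a+cA+Mb)+1)*(cA+cR-1) := ⟨_, rfl⟩
      have hX0 : 0 ≤ cA*a+cA+Mb := by nlinarith
      have hC0 : 0 < C := by
        rw [hCdef]; apply mul_pos (by nlinarith) (by linarith)
      obtain ⟨δ, hδdef⟩ : ∃ y, y = min (min (m1/(2*C)) (m2/(2*C))) 1 := ⟨_, rfl⟩
      have hδ0 : 0 < δ := by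
        rw [hδdef]
        exact lt_min (lt_min (by positivity) (by positivity)) one_pos
      have hδ1 : δ ≤ 1 := hδdef ▸ min_le_right _ _
      have hδm1 : δ ≤ m1/(2*C) := hδdef ▸ (min_le_left _ _).trans (min_le_left _ _)
      have hδm2 : δ ≤ m2/(2*C) := hδdef ▸ (min_le_left _ _).trans (min_le_right _ _)
      have hδC1 : δ*C ≤ m1/2 := by
        rw [le_div_iff₀ (by positivity : (0:ℝ) < 2*C)] at hδm1
        rw [le_div_iff₀ (by norm_num : (0:ℝ) < 2)]
        linarith
      have hδC2 : δ*C ≤ m2/2 := by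
        rw [le_div_iff₀ (by positivity : (0:ℝ) < 2*C)] at hδm2
        rw [le_div_iff₀ (by norm_num : (0:ℝ) < 2)]
        linarith
      refine ⟨1/δ + 1, fun x hx => ?_⟩
      have hinv : δ * (1/δ) = 1 := mul_one_div_cancel (ne_of_gt hδ0)
      have hδinv1 : 1 ≤ 1/δ := one_le_one_div hδ0 hδ1
      have hx1 : 1 ≤ x := by linarith
      have hxpos : 0 < x := by linarith
      have hs0 : (0:ℝ) ≤ 1/x := by positivity
      have hsδ : 1/x < δ := by
        rw [div_lt_iff₀ hxpos]
        have h3 : δ*(1/δ+1) ≤ δ*x := mul_le_mul_of_nonneg_left hx hδ0.le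
        have h4 : δ*(1/δ+1) = 1 + δ := by rw [mul_add, hinv, mul_one]
        linarith
      have hs1 : 1/x ≤ 1 := (div_le_one hxpos).mpr hx1
      have hfx : 0 < f x := hfpos x hxpos
      have htpos : 0 < cR * f x / x := by positivity
      have hQ0 : Qf a r cA cR (1/x) (cR * f x / x) = 0 := by
        have hG := hfroot x hxpos
        rw [G_eq_Qf a r cA cR x (f x) (ne_of_gt hxpos)] at hG
        have hx3 : x^3 ≠ 0 := by positivity
        exact (mul_eq_zero.mp hG).resolve_left hx3
      have htMb : cR * f x / x ≤ Mb := by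
        by_contra hcon
        push_neg at hcon
        have := hfar (1/x) (cR * f x / x) hs0 hs1 (hMbM0.trans hcon.le)
        linarith
      obtain ⟨hpert1, hpert2⟩ := pert_bound a r cA cR Mb (1/x) (cR * f x / x)
        ha hr0 hr1 hcA hcR hs0 hs1 htpos.le htMb
      rw [← hCdef] at hpert1 hpert2
      have hsC : (1/x)*C < δ*C := mul_lt_mul_of_pos_right hsδ hC0
      have htup : cR * f x / x < t0 + ε := by
        by_contra hcon
        push_neg at hcon
        have hmax := hz1max (Set.mem_Icc.mpr ⟨hcon, htMb⟩)
        have hPt : Pth a r cA cR (cR * f x / x) ≤ -m1 := by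
          rw [hm1def]; simpa using hmax
        linarith
      have htlow : t2 < cR * f x / x := by
        by_contra hcon
        push_neg at hcon
        have hmin := hz2min (Set.mem_Icc.mpr ⟨htpos.le, hcon⟩)
        have hPt : m2 ≤ Pth a r cA cR (cR * f x / x) := by
          rw [hm2def]; exact hmin
        linarith
      rw [Real.dist_eq, abs_lt]
      have ht2ge : t0 - ε ≤ t2 := ht2def ▸ le_max_left _ _
      exact ⟨by linarith, by linarith⟩
    have heq : (fun x => cR * f x / x / cR) = (fun x => f x / x) := by
      funext x
      rw [div_div, mul_comm x cR, mul_div_mul_left _ _ (ne_of_gt hcR0)]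
    have h2 := htend.div_const cR
    rw [heq] at h2
    exact h2
  · -- the equation
    have hcRα : cR * (t0 / cR) = t0 := by
      rw [← mul_div_assoc, mul_div_cancel_left₀ _ (ne_of_gt hcR0)]
    have hexpr : (cA * a + cR * r * (t0/cR)) ^ 3 - (cA + cR * (t0/cR)) ^ 3
        + (cR - 1) * ((cA * a) ^ 3 - cA ^ 3)
        + (cA - 1) * ((cR * r * (t0/cR)) ^ 3 - (cR * (t0/cR)) ^ 3)
        = Pth a r cA cR (cR*(t0/cR)) := by
      unfold Pth; ring
    rw [hexpr, hcRα, ht0eq]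
end

section
/- Let a > 1, 0 < r < 1 and c_A, c_R ≥ 1 be real numbers. Then there is no x > 0 such that simultaneously a₂(x) > 0 and a₁(x) < 0, where a₁(x) = 3 c_R·[r·(1 + a c_A x)² − (1 + c_A x)² + (c_A − 1)(r − 1)] and a₂(x) = 3 c_R²·[r²·(1 + a c_A x) − (1 + c_A x) + (c_A − 1)(r² − 1)]. -/
set_option maxHeartbeats 1000000


/-- Incompatibility of `a₂(x) > 0` and `a₁(x) < 0` for the coefficients of the
cubic `P(y) = G(x,y)`: there is no `x > 0` with both conditions. -/
theorem coefficients_incompatible (a r cA cR : ℝ)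
    (ha : 1 < a) (hr0 : 0 < r) (hr1 : r < 1) (hcA : 1 ≤ cA) (hcR : 1 ≤ cR) :
    ¬ ∃ x : ℝ, 0 < x ∧
      0 < 3 * cR ^ 2 * (r ^ 2 * (1 + a * cA * x) - (1 + cA * x) + (cA - 1) * (r ^ 2 - 1)) ∧
      3 * cR * (r * (1 + a * cA * x) ^ 2 - (1 + cA * x) ^ 2 + (cA - 1) * (r - 1)) < 0 := by
  rintro ⟨x, hx, h2, h1⟩
  have hcR0 : (0:ℝ) < cR := lt_of_lt_of_le one_pos hcR
  have hv : (1:ℝ) < 1 + cA * x := by nlinarith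
  have hu : 1 + cA * x < 1 + a * cA * x := by nlinarith
  have k2 : 0 < r ^ 2 * (1 + a * cA * x) - (1 + cA * x) + (cA - 1) * (r ^ 2 - 1) := by
    have h3 : (0:ℝ) < 3 * cR ^ 2 := by positivity
    nlinarith [mul_pos h3 (by nlinarith : (0:ℝ) < r ^ 2 * (1 + a * cA * x) - (1 + cA * x) + (cA - 1) * (r ^ 2 - 1))]
  have k1 : r * (1 + a * cA * x) ^ 2 - (1 + cA * x) ^ 2 + (cA - 1) * (r - 1) < 0 := by
    nlinarith
  set u := 1 + a * cA * x with hudef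
  set v := 1 + cA * x with hvdef
  have hv0 : (0:ℝ) < v := by linarith
  have hu0 : (0:ℝ) < u := by linarith
  -- r² u² ≥ (v + (cA-1)(1-r²)) u
  have s1 : (v + (cA - 1) * (1 - r ^ 2)) * u ≤ r ^ 2 * u * u := by nlinarith [mul_pos k2 hu0]
  have s2 : v * v < v * u := by nlinarith
  have s3 : (cA - 1) * (1 - r) ≤ (cA - 1) * (1 - r ^ 2) * u := by nlinarith [mul_nonneg (mul_nonneg (by linarith : (0:ℝ) ≤ cA - 1) (by linarith : (0:ℝ) ≤ 1 - r)) (by nlinarith : (0:ℝ) ≤ (1 + r) * u - 1)]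
  have s4 : r ^ 2 * u * u < r * u * u := by
    have hr2 : r ^ 2 < r := by nlinarith
    have := mul_lt_mul_of_pos_right hr2 (mul_pos hu0 hu0)
    linarith [this]
  have pos : 0 < r * u ^ 2 - v ^ 2 + (cA - 1) * (r - 1) := by nlinarith [s1, s2, s3, s4]
  linarith
end

section
/- Let A, R, K_A, K_R, a, r be positive real numbers, let n ≥ 1 be a natural number, and let c ≥ 1 be real. Define G(δ) = [(1 − 1/c)·δ^n + (1/c)·(δ + a c A/K_A + r c R/K_R)^n] / [(1 − 1/c)·δ^n + (1/c)·(δ + c A/K_A + c R/K_R)^n] for δ > 0. Then: (i) for every δ > 0, G(δ) > 1 if and only if a·A/K_A + r·R/K_R > A/K_A + R/K_R; (ii) if a·A/K_A + r·R/K_R > A/K_A + R/K_R then G is strictly decreasing on (0,∞); (iii) if a·A/K_A + r·R/K_R < A/K_A + R/K_R then G is strictly increasing on (0,∞). -/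
/-- If `0 ≤ t ≤ s`, `s ≤ p`, `t ≤ q` and `s - t ≤ p - q`, then `sⁿ - tⁿ ≤ pⁿ - qⁿ`. -/
lemma aux_pow_sub_pow_le {p q s t : ℝ} (ht : 0 ≤ t) (hts : t ≤ s) (hsp : s ≤ p)
    (htq : t ≤ q) (hd : s - t ≤ p - q) (n : ℕ) : s ^ n - t ^ n ≤ p ^ n - q ^ n := by
  rw [← geom_sum₂_mul s t n, ← geom_sum₂_mul p q n]
  have hs : 0 ≤ s := ht.trans hts
  apply mul_le_mul
  · apply Finset.sum_le_sum
    intro i _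
    exact mul_le_mul (pow_le_pow_left₀ hs hsp i) (pow_le_pow_left₀ ht htq _)
      (pow_nonneg ht _) (pow_nonneg (hs.trans hsp) _)
  · exact hd
  · linarith
  · apply Finset.sum_nonneg
    intro i _
    exact mul_nonneg (pow_nonneg (hs.trans hsp) _) (pow_nonneg (ht.trans htq) _)

/-- Key cross-multiplied inequality for monotonicity of the regulation factor. -/
lemma aux_key {u v b e : ℝ} (hv : 0 < v) (huv : v < u) (hb : 0 ≤ b) (he : 0 < e)
    {n : ℕ} (hn : 1 ≤ n) {δ1 δ2 : ℝ} (h1 : 0 < δ1) (h12 : δ1 < δ2) :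
    (b * δ2 ^ n + e * (δ2 + u) ^ n) * (b * δ1 ^ n + e * (δ1 + v) ^ n) <
      (b * δ1 ^ n + e * (δ1 + u) ^ n) * (b * δ2 ^ n + e * (δ2 + v) ^ n) := by
  have h2 : 0 < δ2 := h1.trans h12
  have hu : 0 < u := hv.trans huv
  have hn0 : n ≠ 0 := by omega
  have hB1 : (δ1 * (δ2 + u)) ^ n - (δ1 * (δ2 + v)) ^ n ≤
      (δ2 * (δ1 + u)) ^ n - (δ2 * (δ1 + v)) ^ n := by
    apply aux_pow_sub_pow_le
    · nlinarith
    · nlinarith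
    · nlinarith
    · nlinarith
    · nlinarith
  have hB2 : ((δ2 + u) * (δ1 + v)) ^ n < ((δ1 + u) * (δ2 + v)) ^ n := by
    apply pow_lt_pow_left₀ _ (by nlinarith) hn0
    nlinarith
  simp only [mul_pow] at hB1 hB2
  have e1 : 0 ≤ b * e * ((δ2 ^ n * (δ1 + u) ^ n + δ1 ^ n * (δ2 + v) ^ n) -
      (δ2 ^ n * (δ1 + v) ^ n + δ1 ^ n * (δ2 + u) ^ n)) :=
    mul_nonneg (mul_nonneg hb he.le) (by linarith)
  have e2 : 0 < e * e * ((δ1 + u) ^ n * (δ2 + v) ^ n - (δ2 + u) ^ n * (δ1 + v) ^ n) :=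
    mul_pos (mul_pos he he) (by linarith)
  nlinarith [e1, e2]

/-- Monotonicity of the regulation factor with respect to a proportional affinity
scaling `δ`: (i) `G(δ) > 1` iff `a·A/K_A + r·R/K_R > A/K_A + R/K_R`;
(ii) in that case `G` is strictly decreasing on `(0,∞)`;
(iii) in the opposite strict case `G` is strictly increasing on `(0,∞)`. -/
theorem affinity_scaling_monotone (A R KA KR a r : ℝ) (n : ℕ) (c : ℝ)
    (hA : 0 < A) (hR : 0 < R) (hKA : 0 < KA) (hKR : 0 < KR)
    (ha : 0 < a) (hr : 0 < r) (hn : 1 ≤ n) (hc : 1 ≤ c) :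
    (∀ δ : ℝ, 0 < δ →
      (1 < ((1 - 1 / c) * δ ^ n + (1 / c) * (δ + a * c * A / KA + r * c * R / KR) ^ n) /
            ((1 - 1 / c) * δ ^ n + (1 / c) * (δ + c * A / KA + c * R / KR) ^ n)
        ↔ A / KA + R / KR < a * A / KA + r * R / KR)) ∧
    (A / KA + R / KR < a * A / KA + r * R / KR →
      StrictAntiOn (fun δ : ℝ =>
        ((1 - 1 / c) * δ ^ n + (1 / c) * (δ + a * c * A / KA + r * c * R / KR) ^ n) /
          ((1 - 1 / c) * δ ^ n + (1 / c) * (δ + c * A / KA + c * R / KR) ^ n))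
        (Set.Ioi 0)) ∧
    (a * A / KA + r * R / KR < A / KA + R / KR →
      StrictMonoOn (fun δ : ℝ =>
        ((1 - 1 / c) * δ ^ n + (1 / c) * (δ + a * c * A / KA + r * c * R / KR) ^ n) /
          ((1 - 1 / c) * δ ^ n + (1 / c) * (δ + c * A / KA + c * R / KR) ^ n))
        (Set.Ioi 0)) := by
  have hc0 : (0:ℝ) < c := lt_of_lt_of_le one_pos hc
  have he : (0:ℝ) < 1 / c := by positivity
  have hb : (0:ℝ) ≤ 1 - 1 / c := by
    rw [sub_nonneg]
    exact div_le_one_of_le₀ hc hc0.le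
  have hn0 : n ≠ 0 := by omega
  set u : ℝ := a * c * A / KA + r * c * R / KR with hu_def
  set v : ℝ := c * A / KA + c * R / KR with hv_def
  have hu : 0 < u := by positivity
  have hv : 0 < v := by positivity
  -- denominators/numerators are positive
  have hD : ∀ w : ℝ, 0 < w → ∀ δ : ℝ, 0 < δ →
      0 < (1 - 1 / c) * δ ^ n + (1 / c) * (δ + w) ^ n := by
    intro w hw δ hδ
    have : (0:ℝ) < (1 / c) * (δ + w) ^ n := mul_pos he (pow_pos (by linarith) n)
    nlinarith [mul_nonneg hb (pow_nonneg hδ.le n)]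
  -- comparison between u and v
  have hcomp : ∀ s t : ℝ, (c * s < c * t ↔ s < t) := fun s t => mul_lt_mul_iff_right₀ hc0
  have huv_iff : (v < u) ↔ (A / KA + R / KR < a * A / KA + r * R / KR) := by
    rw [hu_def, hv_def, show c * A / KA + c * R / KR = c * (A / KA + R / KR) by ring,
      show a * c * A / KA + r * c * R / KR = c * (a * A / KA + r * R / KR) by ring]
    exact hcomp _ _
  refine ⟨?_, ?_, ?_⟩
  · -- (i)
    intro δ hδ
    have hDv := hD v hv δ hδ
    rw [show δ + a * c * A / KA + r * c * R / KR = δ + u by rw [hu_def]; ring,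
      show δ + c * A / KA + c * R / KR = δ + v by rw [hv_def]; ring,
      one_lt_div hDv, add_lt_add_iff_left, mul_lt_mul_iff_right₀ he,
      pow_lt_pow_iff_left₀ (by linarith) (by linarith) hn0, add_lt_add_iff_left]
    exact huv_iff
  · -- (ii)
    intro h δ1 h1 δ2 h2 h12
    simp only [Set.mem_Ioi] at h1 h2
    have key := aux_key hv (huv_iff.mpr h) hb he hn h1 h12
    simp only []
    rw [show δ1 + a * c * A / KA + r * c * R / KR = δ1 + u by rw [hu_def]; ring,
      show δ1 + c * A / KA + c * R / KR = δ1 + v by rw [hv_def]; ring,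
      show δ2 + a * c * A / KA + r * c * R / KR = δ2 + u by rw [hu_def]; ring,
      show δ2 + c * A / KA + c * R / KR = δ2 + v by rw [hv_def]; ring,
      div_lt_div_iff₀ (hD v hv δ2 h2) (hD v hv δ1 h1)]
    exact key
  · -- (iii)
    intro h δ1 h1 δ2 h2 h12
    simp only [Set.mem_Ioi] at h1 h2
    have hvu : u < v := by
      rw [hu_def, hv_def, show c * A / KA + c * R / KR = c * (A / KA + R / KR) by ring,
        show a * c * A / KA + r * c * R / KR = c * (a * A / KA + r * R / KR) by ring]
      exact (hcomp _ _).mpr h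
    have key := aux_key hu hvu hb he hn h1 h12
    simp only []
    rw [show δ1 + a * c * A / KA + r * c * R / KR = δ1 + u by rw [hu_def]; ring,
      show δ1 + c * A / KA + c * R / KR = δ1 + v by rw [hv_def]; ring,
      show δ2 + a * c * A / KA + r * c * R / KR = δ2 + u by rw [hu_def]; ring,
      show δ2 + c * A / KA + c * R / KR = δ2 + v by rw [hv_def]; ring,
      div_lt_div_iff₀ (hD v hv δ1 h1) (hD v hv δ2 h2)]
    linarith [key]
end

section
/- Let γ, ε ≥ 0 be real numbers and let n ≥ 1 be a natural number. Define H(c) = [c − 1 + (1 + c·γ)^n] / [c − 1 + (1 + c·ε)^n] for c ≥ 1. Then: (i) for every c ≥ 1, H(c) > 1 if and only if γ > ε; (ii) if γ ≥ ε then H is non-decreasing on [1,∞); (iii) if γ ≤ ε then H is non-increasing on [1,∞). -/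
lemma aux_pow_sub (a b : ℝ) (hb : 0 ≤ b) (hba : b ≤ a) :
    ∀ n : ℕ, a ^ (n+1) - b ^ (n+1) ≤ (n+1 : ℝ) * a ^ n * (a - b)
  | 0 => by simp
  | (n+1) => by
      have ih := aux_pow_sub a b hb hba n
      have ha : 0 ≤ a := hb.trans hba
      have hbn : b ^ (n+1) ≤ a ^ (n+1) := pow_le_pow_left₀ hb hba _
      have h1 : a * (a ^ (n+1) - b ^ (n+1)) ≤ a * ((n+1 : ℝ) * a ^ n * (a - b)) :=
        mul_le_mul_of_nonneg_left ih ha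
      have h2 : b ^ (n+1) * (a - b) ≤ a ^ (n+1) * (a - b) :=
        mul_le_mul_of_nonneg_right hbn (by linarith)
      have e : a ^ (n+1+1) - b ^ (n+1+1)
          = a * (a ^ (n+1) - b ^ (n+1)) + b ^ (n+1) * (a - b) := by ring
      have e2 : a * ((n+1 : ℝ) * a ^ n * (a - b)) + a ^ (n+1) * (a - b)
          = ((n:ℝ)+1+1) * a ^ (n+1) * (a - b) := by rw [pow_succ]; ring
      push_cast
      linarith [h1, h2]

lemma aux_key_s14 (γ ε c : ℝ) (m : ℕ) (hε : 0 ≤ ε) (hγε : ε ≤ γ) (hc : 1 ≤ c) :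
    (c - 1 + (1 + c*γ)^(m+1)) * (1 + ((m:ℝ)+1) * (1 + c*ε)^m * ε)
      ≤ (1 + ((m:ℝ)+1) * (1 + c*γ)^m * γ) * (c - 1 + (1 + c*ε)^(m+1)) := by
  have hγ0 : 0 ≤ γ := hε.trans hγε
  have hc0 : (0:ℝ) < c := lt_of_lt_of_le one_pos hc
  have hb1 : (1:ℝ) ≤ 1 + c*ε := by nlinarith
  have hba : 1 + c*ε ≤ 1 + c*γ := by nlinarith
  have hb0 : (0:ℝ) ≤ 1 + c*ε := by linarith
  have hB1 : (1:ℝ) ≤ (1 + c*ε)^m := one_le_pow₀ hb1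
  have hBA : (1 + c*ε)^m ≤ (1 + c*γ)^m := pow_le_pow_left₀ hb0 hba m
  have hA0 : (0:ℝ) ≤ (1 + c*γ)^m := le_trans (le_trans zero_le_one hB1) hBA
  have q1 : ((m:ℝ)+1)*(c-1)*(ε*(1 + c*ε)^m) ≤ ((m:ℝ)+1)*(c-1)*(ε*(1 + c*γ)^m) :=
    mul_le_mul_of_nonneg_left (mul_le_mul_of_nonneg_left hBA hε)
      (mul_nonneg (by positivity) (by linarith))
  have q2 := aux_pow_sub (1 + c*γ) (1 + c*ε) hb0 hba m
  have q3 : ((m:ℝ)+1)*((1 + c*γ)^m*(γ-ε)) ≤ ((m:ℝ)+1)*((1 + c*γ)^m*(1 + c*ε)^m*(γ-ε)) := by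
    have : (1 + c*γ)^m*(γ-ε) ≤ (1 + c*γ)^m*(1 + c*ε)^m*(γ-ε) := by
      nlinarith [mul_nonneg hA0 (sub_nonneg.2 hγε)]
    nlinarith [this]
  have ea : (1 + c*γ)^(m+1) = (1 + c*γ)^m * (1 + c*γ) := pow_succ _ _
  have eb : (1 + c*ε)^(m+1) = (1 + c*ε)^m * (1 + c*ε) := pow_succ _ _
  rw [ea, eb] at q2 ⊢
  linarith [q1, q2, q3]

lemma aux_hasDeriv (γ ε : ℝ) (m : ℕ) (x : ℝ) (hx : x - 1 + (1 + x*ε)^(m+1) ≠ 0) :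
    HasDerivAt (fun c : ℝ => (c - 1 + (1 + c*γ)^(m+1)) / (c - 1 + (1 + c*ε)^(m+1)))
      (((1 + ((m:ℝ)+1) * (1 + x*γ)^m * γ) * (x - 1 + (1 + x*ε)^(m+1)) -
        (x - 1 + (1 + x*γ)^(m+1)) * (1 + ((m:ℝ)+1) * (1 + x*ε)^m * ε)) /
        (x - 1 + (1 + x*ε)^(m+1))^2) x := by
  have hNin : ∀ δ : ℝ, HasDerivAt (fun c : ℝ => 1 + c*δ) δ x := by
    intro δ
    simpa using ((hasDerivAt_id x).mul_const δ).const_add 1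
  have hN : ∀ δ : ℝ, HasDerivAt (fun c : ℝ => c - 1 + (1 + c*δ)^(m+1))
      (1 + ((m:ℝ)+1) * (1 + x*δ)^m * δ) x := by
    intro δ
    have hp := (hNin δ).pow (m+1)
    simp only [Nat.add_sub_cancel] at hp
    have := ((hasDerivAt_id x).sub_const 1).add hp
    exact this.congr_deriv (show _ = (1 + ((m:ℝ)+1) * (1 + x*δ)^m * δ) by push_cast; ring)
  exact (hN γ).div (hN ε) hx

lemma aux_Dpos (ε : ℝ) (m : ℕ) (hε : 0 ≤ ε) {x : ℝ} (hx : 1 ≤ x) :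
    0 < x - 1 + (1 + x*ε)^(m+1) := by
  have h1 : (0:ℝ) < 1 + x*ε := by nlinarith
  have := pow_pos h1 (m+1)
  linarith

/-- Monotonicity of the regulation factor `H(c)` with respect to the total
cooperativity constant `c`: (i) `H(c) > 1` iff `γ > ε`; (ii) if `γ ≥ ε` then `H`
is non-decreasing on `[1,∞)`; (iii) if `γ ≤ ε` then `H` is non-increasing. -/
theorem cooperativity_monotone (γ ε : ℝ) (n : ℕ)
    (hγ : 0 ≤ γ) (hε : 0 ≤ ε) (hn : 1 ≤ n) :
    (∀ c : ℝ, 1 ≤ c →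
      (1 < (c - 1 + (1 + c * γ) ^ n) / (c - 1 + (1 + c * ε) ^ n) ↔ ε < γ)) ∧
    (ε ≤ γ →
      MonotoneOn (fun c : ℝ => (c - 1 + (1 + c * γ) ^ n) / (c - 1 + (1 + c * ε) ^ n))
        (Set.Ici 1)) ∧
    (γ ≤ ε →
      AntitoneOn (fun c : ℝ => (c - 1 + (1 + c * γ) ^ n) / (c - 1 + (1 + c * ε) ^ n))
        (Set.Ici 1)) := by
  obtain ⟨m, rfl⟩ : ∃ m, n = m + 1 := ⟨n - 1, (Nat.succ_pred_eq_of_pos hn).symm⟩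
  refine ⟨?_, ?_, ?_⟩
  · -- part (i)
    intro c hc
    have hc0 : (0:ℝ) < c := lt_of_lt_of_le one_pos hc
    have hD := aux_Dpos ε m hε hc
    have hεn : (0:ℝ) ≤ 1 + c*ε := by nlinarith
    have hγn : (0:ℝ) ≤ 1 + c*γ := by nlinarith
    rw [one_lt_div hD]
    constructor
    · intro h
      have hpow : (1 + c*ε)^(m+1) < (1 + c*γ)^(m+1) := by linarith
      have := lt_of_pow_lt_pow_left₀ (m+1) hγn hpow
      have : c*ε < c*γ := by linarith
      exact (mul_lt_mul_iff_right₀ hc0).mp this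
    · intro h
      have h1 : 1 + c*ε < 1 + c*γ := by nlinarith
      have := pow_lt_pow_left₀ h1 hεn (by omega : m + 1 ≠ 0)
      linarith
  · -- part (ii)
    intro hle
    apply monotoneOn_of_deriv_nonneg (convex_Ici 1)
    · intro x hx
      exact (aux_hasDeriv γ ε m x (aux_Dpos ε m hε hx).ne').differentiableAt.continuousAt.continuousWithinAt
    · rw [interior_Ici]
      intro x hx
      have hx1 : (1:ℝ) ≤ x := le_of_lt hx
      exact (aux_hasDeriv γ ε m x (aux_Dpos ε m hε hx1).ne').differentiableAt.differentiableWithinAt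
    · rw [interior_Ici]
      intro x hx
      have hx1 : (1:ℝ) ≤ x := le_of_lt hx
      rw [(aux_hasDeriv γ ε m x (aux_Dpos ε m hε hx1).ne').deriv]
      apply div_nonneg _ (sq_nonneg _)
      have := aux_key_s14 γ ε x m hε hle hx1
      linarith
  · -- part (iii)
    intro hle
    apply antitoneOn_of_deriv_nonpos (convex_Ici 1)
    · intro x hx
      exact (aux_hasDeriv γ ε m x (aux_Dpos ε m hε hx).ne').differentiableAt.continuousAt.continuousWithinAt
    · rw [interior_Ici]
      intro x hx
      have hx1 : (1:ℝ) ≤ x := le_of_lt hx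
      exact (aux_hasDeriv γ ε m x (aux_Dpos ε m hε hx1).ne').differentiableAt.differentiableWithinAt
    · rw [interior_Ici]
      intro x hx
      have hx1 : (1:ℝ) ≤ x := le_of_lt hx
      rw [(aux_hasDeriv γ ε m x (aux_Dpos ε m hε hx1).ne').deriv]
      apply div_nonpos_of_nonpos_of_nonneg _ (sq_nonneg _)
      have := aux_key_s14 ε γ x m hγ hle hx1
      linarith
end

section
/- Let a > 1, 0 < r < 1, K_A, K_R > 0, c ≥ 1 be real numbers, and let 0 < δ₁ < δ₂. For A, R ≥ 0 not both zero, let F_δ(A, R) denote the regulation factor with affinity constants δ·K_A, δ·K_R, i.e. F_δ(A, R) = (1 − 1/c + (1/c)(1 + a c A/(δK_A) + r c R/(δK_R))^3) / (1 − 1/c + (1/c)(1 + c A/(δK_A) + c R/(δK_R))^3). If R/K_R < ((a − 1)/(1 − r))·(A/K_A) (activation region) then F_{δ₁}(A, R) > F_{δ₂}(A, R) > 1; if R/K_R > ((a − 1)/(1 − r))·(A/K_A) (repression region) then F_{δ₁}(A, R) < F_{δ₂}(A, R) < 1. -/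
/-- Key cross-multiplied monotonicity inequality. -/
lemma beware_aux_mono (c p q s₁ s₂ : ℝ) (hc : 1 ≤ c) (hq : 0 ≤ q) (hpq : q < p)
    (hs2 : 0 < s₂) (hs12 : s₂ < s₁) :
    (c - 1 + (1 + q * s₁) ^ 3) * (c - 1 + (1 + p * s₂) ^ 3) <
      (c - 1 + (1 + q * s₂) ^ 3) * (c - 1 + (1 + p * s₁) ^ 3) := by
  have hp : 0 < p := lt_of_le_of_lt hq hpq
  have hs1 : 0 < s₁ := hs2.trans hs12
  have e1 : 0 < s₁ ^ 2 - s₂ ^ 2 := by nlinarith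
  have e2 : 0 ≤ p ^ 2 - q ^ 2 := by nlinarith
  have e3 : 0 < s₁ ^ 3 - s₂ ^ 3 := by nlinarith
  have e4 : 0 ≤ p ^ 3 - q ^ 3 := by nlinarith
  have hT0 : 0 ≤ (1 + q * s₂) ^ 3 + (1 + p * s₁) ^ 3
      - (1 + q * s₁) ^ 3 - (1 + p * s₂) ^ 3 := by
    nlinarith [mul_pos (sub_pos.2 hs12) (sub_pos.2 hpq), mul_nonneg e1.le e2,
      mul_nonneg e3.le e4]
  have hT1 : 0 ≤ (c - 1) * ((1 + q * s₂) ^ 3 + (1 + p * s₁) ^ 3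
      - (1 + q * s₁) ^ 3 - (1 + p * s₂) ^ 3) := mul_nonneg (by linarith) hT0
  have hA : (0:ℝ) < (1 + q * s₁) * (1 + p * s₂) := by positivity
  have hAB : (1 + q * s₁) * (1 + p * s₂) < (1 + q * s₂) * (1 + p * s₁) := by
    nlinarith [mul_pos (sub_pos.2 hs12) (sub_pos.2 hpq)]
  have hcube : ((1 + q * s₁) * (1 + p * s₂)) ^ 3 < ((1 + q * s₂) * (1 + p * s₁)) ^ 3 :=
    pow_lt_pow_left₀ hAB hA.le (by norm_num)
  rw [mul_pow, mul_pow] at hcube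
  nlinarith [hcube, hT1]

/-- Positivity of the (scaled) denominator. -/
lemma beware_denom_pos (c q s : ℝ) (hc : 1 ≤ c) (hq : 0 ≤ q) (hs : 0 < s) :
    0 < c - 1 + (1 + q * s) ^ 3 := by
  nlinarith [mul_nonneg hq hs.le, pow_nonneg (mul_nonneg hq hs.le) 3,
    sq_nonneg (q * s)]

/-- Abstract form: activation region facts. -/
lemma beware_master (c p q s₁ s₂ : ℝ) (hc : 1 ≤ c) (hq : 0 ≤ q) (hpq : q < p)
    (hs2 : 0 < s₂) (hs12 : s₂ < s₁) :
    1 < (c - 1 + (1 + p * s₂) ^ 3) / (c - 1 + (1 + q * s₂) ^ 3) ∧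
    (c - 1 + (1 + p * s₂) ^ 3) / (c - 1 + (1 + q * s₂) ^ 3) <
      (c - 1 + (1 + p * s₁) ^ 3) / (c - 1 + (1 + q * s₁) ^ 3) := by
  have hs1 : 0 < s₁ := hs2.trans hs12
  have d1q := beware_denom_pos c q s₁ hc hq hs1
  have d2q := beware_denom_pos c q s₂ hc hq hs2
  constructor
  · rw [one_lt_div d2q]
    have : (1 + q * s₂) ^ 3 < (1 + p * s₂) ^ 3 := by
      apply pow_lt_pow_left₀ _ (by positivity) (by norm_num)
      nlinarith
    linarith
  · rw [div_lt_div_iff₀ d2q d1q]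
    nlinarith [beware_aux_mono c p q s₁ s₂ hc hq hpq hs2 hs12]

/-- Abstract form: repression region facts. -/
lemma beware_master_rev (c p q s₁ s₂ : ℝ) (hc : 1 ≤ c) (hp : 0 ≤ p) (hpq : p < q)
    (hs2 : 0 < s₂) (hs12 : s₂ < s₁) :
    (c - 1 + (1 + p * s₂) ^ 3) / (c - 1 + (1 + q * s₂) ^ 3) < 1 ∧
    (c - 1 + (1 + p * s₁) ^ 3) / (c - 1 + (1 + q * s₁) ^ 3) <
      (c - 1 + (1 + p * s₂) ^ 3) / (c - 1 + (1 + q * s₂) ^ 3) := by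
  have hq : 0 ≤ q := hp.trans hpq.le
  have hs1 : 0 < s₁ := hs2.trans hs12
  have d1q := beware_denom_pos c q s₁ hc hq hs1
  have d2q := beware_denom_pos c q s₂ hc hq hs2
  constructor
  · rw [div_lt_one d2q]
    have : (1 + p * s₂) ^ 3 < (1 + q * s₂) ^ 3 := by
      apply pow_lt_pow_left₀ _ (by positivity) (by norm_num)
      nlinarith
    linarith
  · rw [div_lt_div_iff₀ d1q d2q]
    nlinarith [beware_aux_mono c q p s₁ s₂ hc hp hpq hs2 hs12]

/-- Proportional reduction of binding affinity (larger `δ`) attenuates signaling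
without moving the threshold: in the activation region
`F_{δ₁} > F_{δ₂} > 1` and in the repression region `F_{δ₁} < F_{δ₂} < 1`. -/
theorem proportional_affinity_attenuates (a r KA KR c δ₁ δ₂ A R : ℝ)
    (ha : 1 < a) (hr0 : 0 < r) (hr1 : r < 1) (hKA : 0 < KA) (hKR : 0 < KR)
    (hc : 1 ≤ c) (hδ1 : 0 < δ₁) (hδ12 : δ₁ < δ₂)
    (hA : 0 ≤ A) (hR : 0 ≤ R) (hAR : ¬ (A = 0 ∧ R = 0)) :
    (R / KR < (a - 1) / (1 - r) * (A / KA) →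
      1 < (1 - 1 / c + (1 / c) * (1 + a * c * A / (δ₂ * KA) + r * c * R / (δ₂ * KR)) ^ 3) /
            (1 - 1 / c + (1 / c) * (1 + c * A / (δ₂ * KA) + c * R / (δ₂ * KR)) ^ 3) ∧
      (1 - 1 / c + (1 / c) * (1 + a * c * A / (δ₂ * KA) + r * c * R / (δ₂ * KR)) ^ 3) /
            (1 - 1 / c + (1 / c) * (1 + c * A / (δ₂ * KA) + c * R / (δ₂ * KR)) ^ 3)
        < (1 - 1 / c + (1 / c) * (1 + a * c * A / (δ₁ * KA) + r * c * R / (δ₁ * KR)) ^ 3) /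
            (1 - 1 / c + (1 / c) * (1 + c * A / (δ₁ * KA) + c * R / (δ₁ * KR)) ^ 3)) ∧
    ((a - 1) / (1 - r) * (A / KA) < R / KR →
      (1 - 1 / c + (1 / c) * (1 + a * c * A / (δ₂ * KA) + r * c * R / (δ₂ * KR)) ^ 3) /
            (1 - 1 / c + (1 / c) * (1 + c * A / (δ₂ * KA) + c * R / (δ₂ * KR)) ^ 3) < 1 ∧
      (1 - 1 / c + (1 / c) * (1 + a * c * A / (δ₁ * KA) + r * c * R / (δ₁ * KR)) ^ 3) /
            (1 - 1 / c + (1 / c) * (1 + c * A / (δ₁ * KA) + c * R / (δ₁ * KR)) ^ 3)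
        < (1 - 1 / c + (1 / c) * (1 + a * c * A / (δ₂ * KA) + r * c * R / (δ₂ * KR)) ^ 3) /
            (1 - 1 / c + (1 / c) * (1 + c * A / (δ₂ * KA) + c * R / (δ₂ * KR)) ^ 3)) := by
  have hc0 : (0:ℝ) < c := by linarith
  have hδ2 : (0:ℝ) < δ₂ := hδ1.trans hδ12
  have ha0 : (0:ℝ) < a := by linarith
  have hKA' : KA ≠ 0 := hKA.ne'
  have hKR' : KR ≠ 0 := hKR.ne'
  have hc' : c ≠ 0 := hc0.ne'
  obtain ⟨p, hp_def⟩ : ∃ p : ℝ, p = a * c * A / KA + r * c * R / KR := ⟨_, rfl⟩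
  obtain ⟨q, hq_def⟩ : ∃ q : ℝ, q = c * A / KA + c * R / KR := ⟨_, rfl⟩
  have hp0 : 0 ≤ p := by rw [hp_def]; positivity
  have hq0 : 0 ≤ q := by rw [hq_def]; positivity
  have key_rw : ∀ δ : ℝ, 0 < δ →
      (1 - 1 / c + (1 / c) * (1 + a * c * A / (δ * KA) + r * c * R / (δ * KR)) ^ 3) /
        (1 - 1 / c + (1 / c) * (1 + c * A / (δ * KA) + c * R / (δ * KR)) ^ 3)
      = (c - 1 + (1 + p * (1/δ)) ^ 3) / (c - 1 + (1 + q * (1/δ)) ^ 3) := by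
    intro δ hδ
    have hδ' : δ ≠ 0 := hδ.ne'
    have h1 : 1 + a * c * A / (δ * KA) + r * c * R / (δ * KR) = 1 + p * (1/δ) := by
      rw [hp_def]; field_simp; ring
    have h2 : 1 + c * A / (δ * KA) + c * R / (δ * KR) = 1 + q * (1/δ) := by
      rw [hq_def]; field_simp; ring
    rw [h1, h2]
    have hX : 1 - 1/c + (1/c) * (1 + p*(1/δ))^3 = (c - 1 + (1 + p*(1/δ))^3)/c := by
      field_simp
    have hY : 1 - 1/c + (1/c) * (1 + q*(1/δ))^3 = (c - 1 + (1 + q*(1/δ))^3)/c := by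
      field_simp
    rw [hX, hY, div_div_div_cancel_right₀ hc']
  rw [key_rw δ₁ hδ1, key_rw δ₂ hδ2]
  have hs2 : (0:ℝ) < 1/δ₂ := by positivity
  have hs12 : 1/δ₂ < 1/δ₁ := one_div_lt_one_div_of_lt hδ1 hδ12
  have h1r : (0:ℝ) < 1 - r := by linarith
  constructor
  · intro hact
    have h' : (1 - r) * (R / KR) < (a - 1) * (A / KA) := by
      have h2 := mul_lt_mul_of_pos_left hact h1r
      calc (1 - r) * (R / KR) < (1 - r) * ((a - 1) / (1 - r) * (A / KA)) := h2
        _ = (a - 1) * (A / KA) := by field_simp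
    have hpq : q < p := by
      rw [hp_def, hq_def]
      have h3 := mul_lt_mul_of_pos_left h' hc0
      ring_nf at h3 ⊢
      linarith
    exact beware_master c p q (1/δ₁) (1/δ₂) hc hq0 hpq hs2 hs12
  · intro hrep
    have h' : (a - 1) * (A / KA) < (1 - r) * (R / KR) := by
      have h2 := mul_lt_mul_of_pos_left hrep h1r
      calc (a - 1) * (A / KA) = (1 - r) * ((a - 1) / (1 - r) * (A / KA)) := by
            field_simp
        _ < (1 - r) * (R / KR) := h2
    have hpq : p < q := by
      rw [hp_def, hq_def]
      have h3 := mul_lt_mul_of_pos_left h' hc0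
      ring_nf at h3 ⊢
      linarith
    exact beware_master_rev c p q (1/δ₁) (1/δ₂) hc hp0 hpq hs2 hs12
end

section
/- Let a > 1, 0 < r < 1, K_A, K_R > 0 be real numbers and let 1 ≤ c₁ ≤ c₂. For A, R ≥ 0, let F_c(A, R) = (1 − 1/c + (1/c)(1 + a c A/K_A + r c R/K_R)^3) / (1 − 1/c + (1/c)(1 + c A/K_A + c R/K_R)^3). If R/K_R < ((a − 1)/(1 − r))·(A/K_A) (activation region) then F_{c₁}(A, R) ≤ F_{c₂}(A, R); if R/K_R > ((a − 1)/(1 − r))·(A/K_A) (repression region) then F_{c₁}(A, R) ≥ F_{c₂}(A, R). -/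
private lemma beware_expand (c s : ℝ) (hc : 0 < c) :
    1 - 1 / c + (1 / c) * (1 + c * s) ^ 3 = 1 + 3 * s + 3 * c * s ^ 2 + c ^ 2 * s ^ 3 := by
  field_simp
  ring

private lemma beware_mono (c₁ c₂ u v : ℝ) (hc1 : 0 < c₁) (hc12 : c₁ ≤ c₂)
    (hv : 0 ≤ v) (huv : v ≤ u) :
    (1 - 1 / c₁ + (1 / c₁) * (1 + c₁ * u) ^ 3) / (1 - 1 / c₁ + (1 / c₁) * (1 + c₁ * v) ^ 3)
      ≤ (1 - 1 / c₂ + (1 / c₂) * (1 + c₂ * u) ^ 3) /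
        (1 - 1 / c₂ + (1 / c₂) * (1 + c₂ * v) ^ 3) := by
  have hc2 : 0 < c₂ := lt_of_lt_of_le hc1 hc12
  have hu : 0 ≤ u := le_trans hv huv
  rw [beware_expand c₁ u hc1, beware_expand c₁ v hc1, beware_expand c₂ u hc2,
    beware_expand c₂ v hc2]
  have hD1 : 0 < 1 + 3 * v + 3 * c₁ * v ^ 2 + c₁ ^ 2 * v ^ 3 := by positivity
  have hD2 : 0 < 1 + 3 * v + 3 * c₂ * v ^ 2 + c₂ ^ 2 * v ^ 3 := by positivity
  rw [div_le_div_iff₀ hD1 hD2]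
  nlinarith [mul_nonneg (mul_nonneg (sub_nonneg.2 hc12) (sub_nonneg.2 huv)) (mul_nonneg hu hv),
    mul_nonneg (sub_nonneg.2 hc12) (sub_nonneg.2 huv),
    mul_nonneg (mul_nonneg (sub_nonneg.2 hc12) (sub_nonneg.2 huv))
      (mul_nonneg (mul_nonneg hc1.le hc2.le) (mul_nonneg (mul_nonneg hu hu) (mul_nonneg hv hv))),
    mul_nonneg (mul_nonneg (sub_nonneg.2 hc12) (sub_nonneg.2 huv))
      (mul_nonneg (add_nonneg hc1.le hc2.le)
        (add_nonneg (add_nonneg (add_nonneg (mul_nonneg hu hu) (mul_nonneg hu hv))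
          (mul_nonneg hv hv)) (mul_nonneg (mul_nonneg (by norm_num : (0:ℝ) ≤ 3)
            (mul_nonneg hu hv)) (add_nonneg hu hv)))),
    mul_nonneg (mul_nonneg (sub_nonneg.2 hc12) (sub_nonneg.2 huv))
      (add_nonneg (add_nonneg hu hv) (mul_nonneg (mul_nonneg (by norm_num : (0:ℝ) ≤ 3) hu) hv))]

private lemma beware_pos (c s : ℝ) (hc : 0 < c) (hs : 0 ≤ s) :
    0 < 1 - 1 / c + (1 / c) * (1 + c * s) ^ 3 := by
  rw [beware_expand c s hc]
  positivity

/-- Increasing total cooperativity strengthens signaling: in the activation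
region `F_{c₁} ≤ F_{c₂}` and in the repression region `F_{c₁} ≥ F_{c₂}`. -/
theorem cooperativity_strengthens (a r KA KR c₁ c₂ A R : ℝ)
    (ha : 1 < a) (hr0 : 0 < r) (hr1 : r < 1) (hKA : 0 < KA) (hKR : 0 < KR)
    (hc1 : 1 ≤ c₁) (hc12 : c₁ ≤ c₂) (hA : 0 ≤ A) (hR : 0 ≤ R) :
    (R / KR < (a - 1) / (1 - r) * (A / KA) →
      (1 - 1 / c₁ + (1 / c₁) * (1 + a * c₁ * A / KA + r * c₁ * R / KR) ^ 3) /
          (1 - 1 / c₁ + (1 / c₁) * (1 + c₁ * A / KA + c₁ * R / KR) ^ 3)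
        ≤ (1 - 1 / c₂ + (1 / c₂) * (1 + a * c₂ * A / KA + r * c₂ * R / KR) ^ 3) /
            (1 - 1 / c₂ + (1 / c₂) * (1 + c₂ * A / KA + c₂ * R / KR) ^ 3)) ∧
    ((a - 1) / (1 - r) * (A / KA) < R / KR →
      (1 - 1 / c₂ + (1 / c₂) * (1 + a * c₂ * A / KA + r * c₂ * R / KR) ^ 3) /
          (1 - 1 / c₂ + (1 / c₂) * (1 + c₂ * A / KA + c₂ * R / KR) ^ 3)
        ≤ (1 - 1 / c₁ + (1 / c₁) * (1 + a * c₁ * A / KA + r * c₁ * R / KR) ^ 3) /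
            (1 - 1 / c₁ + (1 / c₁) * (1 + c₁ * A / KA + c₁ * R / KR) ^ 3)) := by
  have hc1' : 0 < c₁ := lt_of_lt_of_le one_pos hc1
  have hc2' : 0 < c₂ := lt_of_lt_of_le hc1' hc12
  have hx : 0 ≤ A / KA := by positivity
  have hy : 0 ≤ R / KR := by positivity
  set x := A / KA with hxdef
  set y := R / KR with hydef
  have hr1' : (0:ℝ) < 1 - r := by linarith
  have ht : (a - 1) / (1 - r) * (1 - r) = a - 1 := div_mul_cancel₀ _ (ne_of_gt hr1')
  have e : ∀ c : ℝ, 0 < c →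
      (1 - 1 / c + (1 / c) * (1 + a * c * A / KA + r * c * R / KR) ^ 3) /
        (1 - 1 / c + (1 / c) * (1 + c * A / KA + c * R / KR) ^ 3)
      = (1 - 1 / c + (1 / c) * (1 + c * (a * x + r * y)) ^ 3) /
        (1 - 1 / c + (1 / c) * (1 + c * (x + y)) ^ 3) := by
    intro c hc
    rw [hxdef, hydef]
    ring_nf
  constructor
  · intro h
    have huv : x + y ≤ a * x + r * y := by nlinarith [mul_lt_mul_of_pos_left h hr1']
    rw [e c₁ hc1', e c₂ hc2']
    exact beware_mono c₁ c₂ (a * x + r * y) (x + y) hc1' hc12 (add_nonneg hx hy) huv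
  · intro h
    have huv : a * x + r * y ≤ x + y := by nlinarith [mul_lt_mul_of_pos_left h hr1']
    rw [e c₁ hc1', e c₂ hc2']
    have hu : 0 ≤ a * x + r * y :=
      add_nonneg (mul_nonneg (by linarith) hx) (mul_nonneg hr0.le hy)
    have key := beware_mono c₁ c₂ (x + y) (a * x + r * y) hc1' hc12 hu huv
    have p1 := beware_pos c₁ (a * x + r * y) hc1' hu
    have p2 := beware_pos c₁ (x + y) hc1' (add_nonneg hx hy)
    have p3 := beware_pos c₂ (a * x + r * y) hc2' hu
    have p4 := beware_pos c₂ (x + y) hc2' (add_nonneg hx hy)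
    rw [div_le_div_iff₀ p1 p3] at key
    rw [div_le_div_iff₀ p4 p2]
    linarith [key]
end

section
/- Let n ≥ 2 be a natural number and c ≥ 1 a real number. Then the function g(x) = (1 + n·x·(1 + c·x)^{n−1}) / (c − 1 + (1 + c·x)^n) is strictly increasing on (0,∞). -/
lemma key1 (A B : ℝ) (n : ℕ) (hA : 0 ≤ A) (hAB : A ≤ B) :
    B ^ n - A ^ n ≤ n * B ^ (n - 1) * (B - A) := by
  have hB : 0 ≤ B := le_trans hA hAB
  rw [← geom_sum₂_mul B A n]
  apply mul_le_mul_of_nonneg_right _ (by linarith)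
  calc (∑ i ∈ Finset.range n, B ^ i * A ^ (n - 1 - i))
      ≤ ∑ i ∈ Finset.range n, B ^ (n - 1) := by
        apply Finset.sum_le_sum
        intro i hi
        rw [Finset.mem_range] at hi
        calc B ^ i * A ^ (n - 1 - i) ≤ B ^ i * B ^ (n - 1 - i) := by
              exact mul_le_mul_of_nonneg_left (pow_le_pow_left₀ hA hAB _) (pow_nonneg hB i)
          _ = B ^ (n - 1) := by
              rw [← pow_add]
              congr 1
              omega
    _ = n * B ^ (n - 1) := by rw [Finset.sum_const, Finset.card_range, nsmul_eq_mul]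

/-- The auxiliary function
`g(x) = (1 + n·x·(1 + c·x)^{n−1}) / (c − 1 + (1 + c·x)^n)` is strictly
increasing on `(0,∞)` for `n ≥ 2` and `c ≥ 1`. -/
theorem aux_g_strictMono (n : ℕ) (c : ℝ) (hn : 2 ≤ n) (hc : 1 ≤ c) :
    StrictMonoOn
      (fun x : ℝ => (1 + n * x * (1 + c * x) ^ (n - 1)) / (c - 1 + (1 + c * x) ^ n))
      (Set.Ioi 0) := by
  intro x hx y hy hxy
  simp only [Set.mem_Ioi] at hx hy
  simp only
  set A : ℝ := 1 + c * x with hAdef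
  set B : ℝ := 1 + c * y with hBdef
  have hA1 : 1 < A := by nlinarith
  have hAB : A < B := by nlinarith
  have hB1 : 1 < B := lt_trans hA1 hAB
  set P : ℝ := A ^ (n - 1) with hPdef
  set Q : ℝ := B ^ (n - 1) with hQdef
  have hP1 : 1 < P := one_lt_pow₀ hA1 (by omega)
  have hPQ : P < Q := pow_lt_pow_left₀ hAB (by linarith) (by omega)
  have hAn : A ^ n = P * A := by rw [hPdef, ← pow_succ]; congr 1; omega
  have hBn : B ^ n = Q * B := by rw [hQdef, ← pow_succ]; congr 1; omega
  have hdA : 0 < c - 1 + A ^ n := by nlinarith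
  have hdB : 0 < c - 1 + B ^ n := by nlinarith
  have hBA : B - A = c * (y - x) := by rw [hAdef, hBdef]; ring
  have hN : (2 : ℝ) ≤ (n : ℝ) := by exact_mod_cast hn
  have hk : Q * B - P * A ≤ (n : ℝ) * Q * c * (y - x) := by
    have := key1 A B n (by linarith) hAB.le
    rw [← hQdef, hAn, hBn, hBA] at this
    linarith [this]
  have hbr : 0 < (c - 1) * x * (Q - P) + (y - x) * Q * (P - 1) := by
    have h1 : 0 ≤ (c - 1) * x * (Q - P) :=
      mul_nonneg (mul_nonneg (by linarith) hx.le) (by linarith)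
    have h2 : 0 < (y - x) * Q * (P - 1) :=
      mul_pos (mul_pos (by linarith) (by linarith)) (by linarith)
    linarith
  rw [div_lt_div_iff₀ hdA hdB, hAn, hBn]
  have key : (1 + (n : ℝ) * y * Q) * (c - 1 + P * (1 + c * x))
      - (1 + (n : ℝ) * x * P) * (c - 1 + Q * (1 + c * y))
      = ((n : ℝ) * Q * c * (y - x) - (Q * (1 + c * y) - P * (1 + c * x)))
        + (n : ℝ) * ((c - 1) * x * (Q - P) + (y - x) * Q * (P - 1)) := by ring
  rw [hAdef, hBdef] at hk ⊢
  have hNbr : 0 < (n : ℝ) * ((c - 1) * x * (Q - P) + (y - x) * Q * (P - 1)) :=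
    mul_pos (by linarith) hbr
  linarith [key, hk, hNbr]
end
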